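/- arXiv:1806.10462 — 11 statements merged into one kernel-verified Lean document; each statement's English description precedes it below -/
import Mathlib

section
/- If R is a quasi-homomorphism from an abelian group G to an abelian group H, and S is a quasi-homomorphism from H to an abelian group K, then the composition S ∘ R = {(a,c) ∈ G × K : there is b ∈ H with (a,b) ∈ R and (b,c) ∈ S} is a quasi-homomorphism from G to K. -/
/-!
`dom (S ∘ R)` contains the image under `fst` of `R ⊓ snd⁻¹(dom S)`, which has finite index in
`R`; images of subgroups keep finite relative index, so this image has finite index in `dom R`
and hence in `G`. An element of `coker (S ∘ R)` lies in the fiber of `S` over some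
`b ∈ coker R`, and each nonempty fiber of `S` is a coset of `coker S`.
-/

namespace QH

variable {G H K : Type*} [AddCommGroup G] [AddCommGroup H] [AddCommGroup K]

def dom (R : AddSubgroup (G × H)) : AddSubgroup G := R.map (AddMonoidHom.fst G H)

def coker (R : AddSubgroup (G × H)) : AddSubgroup H := R.comap (AddMonoidHom.inr G H)

def IsQuasiHom (R : AddSubgroup (G × H)) : Prop :=
  (dom R).FiniteIndex ∧ ((coker R : Set H)).Finite

/-- The composition of additive relations `R ≤ G × H` and `S ≤ H × K`:
`S ∘ R = {(a,c) : ∃ b, (a,b) ∈ R ∧ (b,c) ∈ S}`. -/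
def relComp (S : AddSubgroup (H × K)) (R : AddSubgroup (G × H)) : AddSubgroup (G × K) where
  carrier := {p | ∃ b, (p.1, b) ∈ R ∧ (b, p.2) ∈ S}
  zero_mem' := ⟨0, R.zero_mem, S.zero_mem⟩
  add_mem' := by
    rintro ⟨a, c⟩ ⟨a', c'⟩ ⟨b, hb, hb'⟩ ⟨d, hd, hd'⟩
    exact ⟨b + d, R.add_mem hb hd, S.add_mem hb' hd'⟩
  neg_mem' := by
    rintro ⟨a, c⟩ ⟨b, hb, hb'⟩
    exact ⟨-b, R.neg_mem hb, S.neg_mem hb'⟩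

end QH

namespace AddSubgroup

variable {A B : Type*} [AddGroup A] [AddGroup B]

theorem relIndex_map_map_ne_zero (f : A →+ B) {T R : AddSubgroup A} (h : T.relIndex R ≠ 0) :
    (T.map f).relIndex (R.map f) ≠ 0 := by
  rw [← relIndex_comap]
  exact fun h0 => h (relIndex_eq_zero_of_le_left (le_comap_map f T) h0)

theorem finiteIndex_map_of_relIndex_ne_zero (f : A →+ B) {T R : AddSubgroup A}
    (h : T.relIndex R ≠ 0) (hR : (R.map f).FiniteIndex) : (T.map f).FiniteIndex := by
  rw [finiteIndex_iff, ← relIndex_top_right]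
  exact relIndex_ne_zero_trans (relIndex_map_map_ne_zero f h) (by simpa using hR.index_ne_zero)

end AddSubgroup

namespace QH

variable {G H K : Type*} [AddCommGroup G] [AddCommGroup H] [AddCommGroup K]

theorem dom_inf_comap_snd_finiteIndex {R : AddSubgroup (G × H)} {L : AddSubgroup H}
    (hR : (dom R).FiniteIndex) (hL : L.FiniteIndex) :
    (dom (R ⊓ L.comap (AddMonoidHom.snd G H))).FiniteIndex := by
  refine AddSubgroup.finiteIndex_map_of_relIndex_ne_zero _ ?_ hR
  rw [AddSubgroup.inf_relIndex_left]
  have : (L.comap (AddMonoidHom.snd G H)).FiniteIndex :=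
    ⟨(AddSubgroup.index_comap_of_surjective L Prod.snd_surjective).trans_ne hL.index_ne_zero⟩
  exact AddSubgroup.isFiniteRelIndex_of_finiteIndex.relIndex_ne_zero

theorem dom_inf_comap_snd_le_dom_relComp (R : AddSubgroup (G × H)) (S : AddSubgroup (H × K)) :
    dom (R ⊓ (dom S).comap (AddMonoidHom.snd G H)) ≤ dom (relComp S R) := by
  rintro a ⟨⟨a, b⟩, ⟨hab, ⟨⟨b, c⟩, hbc, rfl⟩⟩, rfl⟩
  exact ⟨(a, c), ⟨b, hab, hbc⟩, rfl⟩

theorem finite_setOf_mem_of_finite_coker {S : AddSubgroup (H × K)}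
    (hS : (coker S : Set K).Finite) (b : H) : {c | (b, c) ∈ S}.Finite := by
  rcases Set.eq_empty_or_nonempty {c | (b, c) ∈ S} with hempty | ⟨c₀, hc₀⟩
  · rw [hempty]
    exact Set.finite_empty
  · refine (hS.image (c₀ + ·)).subset fun c hc => ⟨c - c₀, ?_, add_sub_cancel c₀ c⟩
    simpa [coker] using S.sub_mem hc hc₀

theorem coker_relComp_subset (R : AddSubgroup (G × H)) (S : AddSubgroup (H × K)) :
    (coker (relComp S R) : Set K) ⊆ ⋃ b ∈ (coker R : Set H), {c | (b, c) ∈ S} := by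
  rintro c ⟨b, hb, hbc⟩
  exact Set.mem_biUnion hb hbc

theorem relComp_isQuasiHom (R : AddSubgroup (G × H)) (S : AddSubgroup (H × K))
    (hR : IsQuasiHom R) (hS : IsQuasiHom S) : IsQuasiHom (relComp S R) := by
  obtain ⟨hRdom, hRcoker⟩ := hR
  obtain ⟨hSdom, hScoker⟩ := hS
  constructor
  · have := dom_inf_comap_snd_finiteIndex hRdom hSdom
    exact AddSubgroup.finiteIndex_of_le (dom_inf_comap_snd_le_dom_relComp R S)
  · exact (hRcoker.biUnion fun b _ => finite_setOf_mem_of_finite_coker hScoker b).subset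
      (coker_relComp_subset R S)

end QH
end

section
/- Let R be an additive relation between abelian groups G and H such that im R has finite index in H and ker R is finite. Then R⁻¹ is a quasi-homomorphism from H to G. If moreover R is itself a quasi-homomorphism from G to H, then R ∘ R⁻¹ ≡ id_H and R⁻¹ ∘ R ≡ id_G. -/
/-!
Inversion swaps `dom` with `img` and `ker` with `coker`, so `R⁻¹` is a quasi-homomorphism.
For `R⁻¹ ∘ R`, restricted to `dom R` and enlarged by `dom R × ker R`, both `R⁻¹ ∘ R` and `id`
become `{(a, a') : a ∈ dom R, a' - a ∈ ker R}`, because two points with a common `R`-image differ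
by an element of `ker R`. The statement for `R ∘ R⁻¹` is the same one applied to `R⁻¹`.
-/

namespace QH

variable {G H K : Type*} [AddCommGroup G] [AddCommGroup H] [AddCommGroup K]

def img (R : AddSubgroup (G × H)) : AddSubgroup H := R.map (AddMonoidHom.snd G H)

def ker (R : AddSubgroup (G × H)) : AddSubgroup G := R.comap (AddMonoidHom.inl G H)

/-- The sum of two additive relations: `R + R' = {(a, b+b') : (a,b) ∈ R, (a,b') ∈ R'}`. -/
def relAdd (R R' : AddSubgroup (G × H)) : AddSubgroup (G × H) where
  carrier := {p | ∃ b b', (p.1, b) ∈ R ∧ (p.1, b') ∈ R' ∧ p.2 = b + b'}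
  zero_mem' := ⟨0, 0, R.zero_mem, R'.zero_mem, by simp⟩
  add_mem' := by
    rintro ⟨a, c⟩ ⟨a', c'⟩ ⟨b, b', hb, hb', rfl⟩ ⟨d, d', hd, hd', rfl⟩
    exact ⟨b + d, b' + d', R.add_mem hb hd, R'.add_mem hb' hd', by simp only [Prod.snd_add]; abel⟩
  neg_mem' := by
    rintro ⟨a, c⟩ ⟨b, b', hb, hb', rfl⟩
    exact ⟨-b, -b', R.neg_mem hb, R'.neg_mem hb', by simp only [Prod.snd_neg]; abel⟩

/-- The inverse of an additive relation: `R⁻¹ = {(h,g) : (g,h) ∈ R}`. -/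
def relInv (R : AddSubgroup (G × H)) : AddSubgroup (H × G) :=
  R.map ((AddMonoidHom.snd G H).prod (AddMonoidHom.fst G H))

/-- The diagonal relation `id_D = {(d,d) : d ∈ D}` of a subgroup `D ≤ A`. -/
def relId {A : Type*} [AddCommGroup A] (D : AddSubgroup A) : AddSubgroup (A × A) :=
  D.map ((AddMonoidHom.id A).prod (AddMonoidHom.id A))


/-- Two additive relations `R, R' ≤ G × H` are equivalent if there are a finite-index
subgroup `G₁ ≤ G` and a finite subgroup `F ≤ H` with
`(R ∩ (G₁ × H)) + (G₁ × F) = (R' ∩ (G₁ × H)) + (G₁ × F)`. -/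
def relEquiv (R R' : AddSubgroup (G × H)) : Prop :=
  ∃ (G₁ : AddSubgroup G) (F : AddSubgroup H), G₁.FiniteIndex ∧ ((F : Set H)).Finite ∧
    relAdd (R ⊓ G₁.prod ⊤) (G₁.prod F) = relAdd (R' ⊓ G₁.prod ⊤) (G₁.prod F)

lemma mem_ker {R : AddSubgroup (G × H)} {a : G} : a ∈ ker R ↔ (a, 0) ∈ R := Iff.rfl

lemma mem_coker {R : AddSubgroup (G × H)} {b : H} : b ∈ coker R ↔ (0, b) ∈ R := Iff.rfl

lemma mem_relInv {R : AddSubgroup (G × H)} {a : G} {b : H} : (b, a) ∈ relInv R ↔ (a, b) ∈ R := by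
  refine ⟨?_, fun h => ⟨(a, b), h, rfl⟩⟩
  rintro ⟨⟨a', b'⟩, h, heq⟩
  simp only [AddMonoidHom.prod_apply, AddMonoidHom.coe_snd, AddMonoidHom.coe_fst,
    Prod.mk.injEq] at heq
  rwa [← heq.1, ← heq.2]

lemma relInv_relInv (R : AddSubgroup (G × H)) : relInv (relInv R) = R := by
  ext ⟨a, b⟩
  rw [mem_relInv, mem_relInv]

lemma dom_relInv (R : AddSubgroup (G × H)) : dom (relInv R) = img R := by
  ext b
  constructor
  · rintro ⟨⟨b', a⟩, h, rfl⟩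
    exact ⟨(a, b'), mem_relInv.mp h, rfl⟩
  · rintro ⟨⟨a, b'⟩, h, rfl⟩
    exact ⟨(b', a), mem_relInv.mpr h, rfl⟩

lemma ker_relInv (R : AddSubgroup (G × H)) : ker (relInv R) = coker R := by
  ext b
  rw [mem_ker, mem_coker, mem_relInv]

lemma coker_relInv (R : AddSubgroup (G × H)) : coker (relInv R) = ker R := by
  ext a
  rw [mem_ker, mem_coker, mem_relInv]

lemma isQuasiHom_relInv_iff {R : AddSubgroup (G × H)} :
    IsQuasiHom (relInv R) ↔ (img R).FiniteIndex ∧ (ker R : Set G).Finite := by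
  rw [IsQuasiHom, dom_relInv, coker_relInv]

lemma sub_mem_ker {R : AddSubgroup (G × H)} {a a' : G} {b : H} (h : (a, b) ∈ R)
    (h' : (a', b) ∈ R) : a' - a ∈ ker R := by
  simpa [mem_ker] using R.sub_mem h' h

lemma mem_relComp_relInv_self {R : AddSubgroup (G × H)} {a a' : G} :
    (a, a') ∈ relComp (relInv R) R ↔ ∃ b, (a, b) ∈ R ∧ (a', b) ∈ R := by
  simp only [relComp, AddSubgroup.mem_mk, mem_relInv]
  rfl

lemma mem_relId_top {A : Type*} [AddCommGroup A] {a a' : A} :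
    (a, a') ∈ relId (⊤ : AddSubgroup A) ↔ a = a' := by
  simp [relId, eq_comm]

lemma mem_relAdd_inf_prod {R : AddSubgroup (G × H)} {D : AddSubgroup G} {F : AddSubgroup H}
    {a : G} {b : H} :
    (a, b) ∈ relAdd (R ⊓ D.prod ⊤) (D.prod F) ↔ a ∈ D ∧ ∃ b', (a, b') ∈ R ∧ b - b' ∈ F := by
  constructor
  · rintro ⟨b', b'', ⟨hR, hD, -⟩, ⟨-, hF⟩, rfl⟩
    exact ⟨hD, b', hR, by rwa [add_sub_cancel_left]⟩
  · rintro ⟨hD, b', hR, hF⟩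
    exact ⟨b', b - b', ⟨hR, hD, trivial⟩, ⟨hD, hF⟩, (add_sub_cancel _ _).symm⟩

theorem relEquiv_relComp_relInv_self (R : AddSubgroup (G × H)) (hdom : (dom R).FiniteIndex)
    (hker : (ker R : Set G).Finite) : relEquiv (relComp (relInv R) R) (relId ⊤) := by
  refine ⟨dom R, ker R, hdom, hker, ?_⟩
  ext ⟨a, a'⟩
  simp only [mem_relAdd_inf_prod, mem_relComp_relInv_self, mem_relId_top, exists_eq_left']
  refine and_congr_right fun ha => ⟨?_, fun h => ?_⟩
  · rintro ⟨a'', ⟨b, hab, ha''b⟩, hker⟩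
    simpa using add_mem hker (sub_mem_ker hab ha''b)
  · obtain ⟨⟨_, b⟩, hab, rfl⟩ := ha
    exact ⟨_, ⟨b, hab, hab⟩, h⟩

theorem relInv_isQuasiHom (R : AddSubgroup (G × H))
    (himg : (img R).FiniteIndex) (hker : ((ker R : Set G)).Finite) :
    IsQuasiHom (relInv R) ∧
      (IsQuasiHom R →
        relEquiv (relComp R (relInv R)) (relId (⊤ : AddSubgroup H)) ∧
        relEquiv (relComp (relInv R) R) (relId (⊤ : AddSubgroup G))) := by
  refine ⟨isQuasiHom_relInv_iff.mpr ⟨himg, hker⟩, fun ⟨hdom, hcoker⟩ => ⟨?_, ?_⟩⟩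
  · have h := relEquiv_relComp_relInv_self (relInv R) (dom_relInv R ▸ himg)
      (ker_relInv R ▸ hcoker)
    rwa [relInv_relInv] at h
  · exact relEquiv_relComp_relInv_self R hdom hker

end QH
end

section
/- Let g be an additive relation between abelian groups G and H such that ker g is finite and dom g has finite index in G. If G₁ is a subgroup of G of infinite index, then the subgroup g[G₁] = {h ∈ H : ∃a ∈ G₁, (a,h) ∈ g} has infinite index in im g. -/
namespace QH

variable {G H : Type*} [AddCommGroup G] [AddCommGroup H]

/-- `g⁻¹[B] = {a ∈ G : ∃ b ∈ B, (a,b) ∈ g}`. -/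
def relPreimg (g : AddSubgroup (G × H)) (B : AddSubgroup H) : AddSubgroup G :=
  dom (g ⊓ (⊤ : AddSubgroup G).prod B)

/-- `g[A] = {h ∈ H : ∃ a ∈ A, (a,h) ∈ g}`. -/
def relImg (g : AddSubgroup (G × H)) (A : AddSubgroup G) : AddSubgroup H :=
  img (g ⊓ A.prod (⊤ : AddSubgroup H))

/-!
If `g[G₁]` had finite index in `im g`, then pulling back along `g` would give `g⁻¹[g[G₁]]` finite
index in `dom g`, hence in `G`. But `g⁻¹[g[G₁]] ≤ G₁ + ker g`, and `G₁` has finite index in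
`G₁ + ker g` because `ker g` is finite; so `G₁` would have finite index in `G`.
-/

lemma _root_.AddSubgroup.index_ne_zero_of_index_sup_ne_zero {A K : AddSubgroup G} [Finite K]
    (h : (A ⊔ K).index ≠ 0) : A.index ≠ 0 := by
  have hAK : A.relIndex (A ⊔ K) ≠ 0 := by
    rw [AddSubgroup.relIndex_sup_left]
    exact (A.addSubgroupOf K).index_ne_zero_of_finite
  rw [← AddSubgroup.relIndex_mul_index (le_sup_left : A ≤ A ⊔ K)]
  exact mul_ne_zero hAK h

lemma mem_relPreimg {g : AddSubgroup (G × H)} {B : AddSubgroup H} {a : G} :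
    a ∈ relPreimg g B ↔ ∃ b ∈ B, (a, b) ∈ g := by
  simp [relPreimg, dom, AddSubgroup.mem_prod, and_comm]

lemma mem_relImg {g : AddSubgroup (G × H)} {A : AddSubgroup G} {b : H} :
    b ∈ relImg g A ↔ ∃ a ∈ A, (a, b) ∈ g := by
  simp [relImg, img, AddSubgroup.mem_prod, and_comm]

/-- Both indices are computed inside `g`, through its projections to `G` and to `H`. -/
lemma relIndex_relPreimg_dvd (g : AddSubgroup (G × H)) (B : AddSubgroup H) :
    (relPreimg g B).relIndex (dom g) ∣ B.relIndex (img g) := by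
  have hle : (B.comap (AddMonoidHom.snd G H)) ⊓ g ≤
      (relPreimg g B).comap (AddMonoidHom.fst G H) :=
    fun p hp ↦ mem_relPreimg.2 ⟨p.2, hp.1, hp.2⟩
  rw [dom, img, ← AddSubgroup.relIndex_comap, ← AddSubgroup.relIndex_comap,
    ← AddSubgroup.inf_relIndex_right (B.comap (AddMonoidHom.snd G H))]
  exact AddSubgroup.relIndex_dvd_of_le_left _ hle

lemma relPreimg_relImg_le (g : AddSubgroup (G × H)) (A : AddSubgroup G) :
    relPreimg g (relImg g A) ≤ A ⊔ ker g := by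
  intro a ha
  obtain ⟨b, hb, hab⟩ := mem_relPreimg.1 ha
  obtain ⟨a₁, ha₁, ha₁b⟩ := mem_relImg.1 hb
  have hker : a - a₁ ∈ ker g := by
    show (a - a₁, (0 : H)) ∈ g
    simpa using g.sub_mem hab ha₁b
  simpa using add_mem (AddSubgroup.mem_sup_left ha₁) (AddSubgroup.mem_sup_right hker)

/-- if `ker g` is finite and `dom g` has finite index in `G`, and `G₁ ≤ G`
has infinite index in `G`, then `g[G₁]` has infinite index in `im g`. -/
theorem relImg_infinite_relindex (g : AddSubgroup (G × H)) (G₁ : AddSubgroup G)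
    (hker : ((ker g : Set G)).Finite) (hdom : (dom g).FiniteIndex)
    (hG₁ : G₁.index = 0) :
    (relImg g G₁).relIndex (img g) = 0 := by
  by_contra hB
  have hdom' := hdom.index_ne_zero
  have hrel : (relPreimg g (relImg g G₁)).relIndex (dom g) ≠ 0 :=
    ne_zero_of_dvd_ne_zero hB (relIndex_relPreimg_dvd g _)
  have hpre : (relPreimg g (relImg g G₁)).index ≠ 0 := by
    rw [← AddSubgroup.relIndex_top_right] at hdom' ⊢
    exact AddSubgroup.relIndex_ne_zero_trans hrel hdom'
  have hsup : (G₁ ⊔ ker g).index ≠ 0 :=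
    ne_zero_of_dvd_ne_zero hpre (AddSubgroup.index_dvd_of_le (relPreimg_relImg_le g G₁))
  have : Finite (ker g) := hker.to_subtype
  exact AddSubgroup.index_ne_zero_of_index_sup_ne_zero hsup hG₁

end QH
end

section
/- Let R be an additive relation between abelian groups G and H, and let S, T be additive relations between H and an abelian group K. Then (S + T) ∘ R ⊆ (S ∘ R) + (T ∘ R). If moreover R, S and T are quasi-homomorphisms, then (S + T) ∘ R and (S ∘ R) + (T ∘ R) are equivalent: there are a subgroup G₁ of finite index in G and a finite subgroup F ≤ K such that (((S+T)∘R) ∩ (G₁ × K)) + (G₁ × F) = (((S∘R)+(T∘R)) ∩ (G₁ × K)) + (G₁ × F). -/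
/-!
Two nested relations `L ≤ M` are equivalent as soon as `dom L` has finite index and `coker M`
is finite: take `G₁ = dom L` and `F = coker M`, and note that `c - d ∈ coker M` whenever
`(a, c) ∈ M` and `(a, d) ∈ L`. Sums and composites of quasi-homomorphisms are again
quasi-homomorphisms, so this applies to `L = (S + T) ∘ R ≤ M = (S ∘ R) + (T ∘ R)`.
-/

namespace QH

variable {G H K : Type*} [AddCommGroup G] [AddCommGroup H] [AddCommGroup K]

open Pointwise

lemma finiteIndex_map {A B : Type*} [AddGroup A] [AddGroup B] (f : A →+ B) [f.range.FiniteIndex]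
    (P : AddSubgroup A) [P.FiniteIndex] : (P.map f).FiniteIndex := by
  have : (P ⊔ f.ker).FiniteIndex := AddSubgroup.finiteIndex_of_le le_sup_left
  constructor
  rw [AddSubgroup.index_map]
  exact mul_ne_zero AddSubgroup.FiniteIndex.index_ne_zero AddSubgroup.FiniteIndex.index_ne_zero

lemma mem_dom {R : AddSubgroup (G × H)} {a : G} : a ∈ dom R ↔ ∃ b, (a, b) ∈ R := by
  simp [dom]

lemma sub_mem_coker {R : AddSubgroup (G × H)} {a : G} {b b' : H} (h : (a, b) ∈ R)
    (h' : (a, b') ∈ R) : b - b' ∈ coker R := by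
  simpa [coker] using R.sub_mem h h'

lemma relComp_relAdd_le (R : AddSubgroup (G × H)) (S T : AddSubgroup (H × K)) :
    relComp (relAdd S T) R ≤ relAdd (relComp S R) (relComp T R) := by
  rintro ⟨a, c⟩ ⟨b, hbR, c₁, c₂, hc₁, hc₂, rfl⟩
  exact ⟨c₁, c₂, ⟨b, hbR, hc₁⟩, ⟨b, hbR, hc₂⟩, rfl⟩

lemma finite_setOf_mem_of_finite_coker_s9 {R : AddSubgroup (G × H)}
    (hR : (coker R : Set H).Finite) (a : G) : {b | (a, b) ∈ R}.Finite := by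
  rcases Set.eq_empty_or_nonempty {b | (a, b) ∈ R} with h | ⟨b₀, hb₀⟩
  · simp [h]
  · exact (hR.image (· + b₀)).subset fun b hb =>
      ⟨b - b₀, sub_mem_coker hb hb₀, sub_add_cancel b b₀⟩

lemma finiteIndex_dom_inf_prod {R : AddSubgroup (G × H)} [(dom R).FiniteIndex]
    (H₁ : AddSubgroup H) [H₁.FiniteIndex] :
    (dom (R ⊓ (⊤ : AddSubgroup G).prod H₁)).FiniteIndex := by
  -- `R ⊓ (G × H₁)` contains the kernel of `R → H ⧸ H₁`, whose image in `G` has finite index.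
  let f : R →+ G := (AddMonoidHom.fst G H).comp R.subtype
  let g : R →+ H ⧸ H₁ := (QuotientAddGroup.mk' H₁).comp ((AddMonoidHom.snd G H).comp R.subtype)
  have hrange : f.range = dom R := by
    rw [AddMonoidHom.range_comp, AddSubgroup.range_subtype]
    rfl
  have : f.range.FiniteIndex := hrange ▸ inferInstance
  have hle : g.ker.map f ≤ dom (R ⊓ (⊤ : AddSubgroup G).prod H₁) := by
    rintro _ ⟨⟨p, hpR⟩, hp, rfl⟩
    exact ⟨p, ⟨hpR, trivial, (QuotientAddGroup.eq_zero_iff _).mp hp⟩, rfl⟩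
  have := finiteIndex_map f g.ker
  exact AddSubgroup.finiteIndex_of_le hle

namespace IsQuasiHom

lemma relAdd {S T : AddSubgroup (G × H)} (hS : IsQuasiHom S) (hT : IsQuasiHom T) :
    IsQuasiHom (QH.relAdd S T) := by
  have := hS.1
  have := hT.1
  have hdom : dom S ⊓ dom T ≤ dom (QH.relAdd S T) := by
    rintro a ⟨haS, haT⟩
    obtain ⟨b, hb⟩ := mem_dom.mp haS
    obtain ⟨b', hb'⟩ := mem_dom.mp haT
    exact mem_dom.mpr ⟨b + b', b, b', hb, hb', rfl⟩
  have hcoker : (coker (QH.relAdd S T) : Set H) ⊆ coker S + coker T := by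
    rintro _ ⟨b, b', hb, hb', rfl⟩
    exact Set.add_mem_add hb hb'
  exact ⟨AddSubgroup.finiteIndex_of_le hdom, (hS.2.add hT.2).subset hcoker⟩

lemma relComp {R : AddSubgroup (G × H)} {S : AddSubgroup (H × K)} (hR : IsQuasiHom R)
    (hS : IsQuasiHom S) : IsQuasiHom (QH.relComp S R) := by
  have := hR.1
  have := hS.1
  have := finiteIndex_dom_inf_prod (R := R) (dom S)
  have hdom : dom (R ⊓ (⊤ : AddSubgroup G).prod (dom S)) ≤ dom (QH.relComp S R) := by
    rintro a ⟨⟨a, b⟩, ⟨hbR, -, hbS⟩, rfl⟩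
    obtain ⟨c, hc⟩ := mem_dom.mp hbS
    exact mem_dom.mpr ⟨c, b, hbR, hc⟩
  have hcoker : (coker (QH.relComp S R) : Set K) ⊆ ⋃ b ∈ (coker R : Set H), {c | (b, c) ∈ S} := by
    rintro c ⟨b, hbR, hbS⟩
    exact Set.mem_biUnion hbR hbS
  exact ⟨AddSubgroup.finiteIndex_of_le hdom,
    (hR.2.biUnion fun b _ => finite_setOf_mem_of_finite_coker_s9 hS.2 b).subset hcoker⟩

end IsQuasiHom

lemma relEquiv_of_le {L M : AddSubgroup (G × H)} (hLM : L ≤ M) (hL : (dom L).FiniteIndex)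
    (hM : (coker M : Set H).Finite) : relEquiv L M := by
  refine ⟨dom L, coker M, hL, hM, le_antisymm ?_ ?_⟩
  · rintro ⟨a, x⟩ ⟨c, f, ⟨hcL, hcG⟩, hf, rfl⟩
    exact ⟨c, f, ⟨hLM hcL, hcG⟩, hf, rfl⟩
  · rintro ⟨a, x⟩ ⟨c, f, ⟨hcM, haL, -⟩, ⟨-, hfM⟩, rfl⟩
    obtain ⟨d, hdL⟩ := mem_dom.mp haL
    have hcd : c - d ∈ coker M := sub_mem_coker hcM (hLM hdL)
    refine ⟨d, c - d + f, ⟨hdL, haL, trivial⟩, ⟨haL, (coker M).add_mem hcd hfM⟩, ?_⟩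
    dsimp only
    abel

/-- `(S + T) ∘ R ⊆ (S ∘ R) + (T ∘ R)`, and if `R`, `S`, `T` are
quasi-homomorphisms then the two sides are equivalent. -/
theorem relComp_relAdd (R : AddSubgroup (G × H)) (S T : AddSubgroup (H × K)) :
    relComp (relAdd S T) R ≤ relAdd (relComp S R) (relComp T R) ∧
      (IsQuasiHom R → IsQuasiHom S → IsQuasiHom T →
        relEquiv (relComp (relAdd S T) R) (relAdd (relComp S R) (relComp T R))) :=
  ⟨relComp_relAdd_le R S T, fun hR hS hT =>
    relEquiv_of_le (relComp_relAdd_le R S T) (hR.relComp (hS.relAdd hT)).1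
      ((hR.relComp hS).relAdd (hR.relComp hT)).2⟩

end QH
end

section
/- Let G and H be abelian groups, let g be an additive relation between G and H with coker g finite and im g of finite index in H, and let f be an additive relation between G and H with ker f finite and dom f of finite index in G. If H₁ ≤ H₂ are subgroups of H with H₁ of infinite index in H₂, then the subgroup f[g⁻¹[H₁]] has infinite index in f[g⁻¹[H₂]]. -/
/-!
View a relation `R ≤ G × H` as the group `R` with projections `p : R → G` and `q : R → H`, so
that `R⁻¹[B] = p (q⁻¹ B)` and `R[A] = q (p⁻¹ A)`. Finite relative index is reflected by `p`,
because `ker p ≅ coker R` is finite and so `S` has finite index in `S ⊔ ker p`; it passes from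
`q⁻¹ B₁, q⁻¹ B₂` to their images `Bᵢ ⊓ im R`, and from these to `B₁, B₂` because `im R` has
finite index. Hence `[R⁻¹B₂ : R⁻¹B₁] < ∞` forces `[B₂ : B₁] < ∞`; applying this to `f` with the
projections exchanged and then to `g` gives the theorem.
-/

namespace Subgroup

section Group

variable {G G' : Type*} [Group G] [Group G']

@[to_additive]
theorem relIndex_map_map_ne_zero (f : G →* G') {H K : Subgroup G} (h : H.relIndex K ≠ 0) :
    (H.map f).relIndex (K.map f) ≠ 0 := by
  rw [← relIndex_comap]
  exact mt (relIndex_eq_zero_of_le_left (le_comap_map f H)) h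

@[to_additive]
theorem relIndex_ne_zero_of_inter {H K L : Subgroup G} [L.FiniteIndex]
    (h : (H ⊓ L).relIndex (K ⊓ L) ≠ 0) : H.relIndex K ≠ 0 := by
  have hK : (K ⊓ L).relIndex K ≠ 0 := by
    rw [inf_relIndex_left]
    exact isFiniteRelIndex_of_finiteIndex.relIndex_ne_zero
  exact mt (relIndex_eq_zero_of_le_left inf_le_left) (relIndex_ne_zero_trans h hK)

end Group

section CommGroup

variable {K G H : Type*} [CommGroup K] [Group G] [Group H]

@[to_additive]
theorem relIndex_ne_zero_of_map_map (f : K →* G) [Finite f.ker] {S T : Subgroup K}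
    (h : (S.map f).relIndex (T.map f) ≠ 0) : S.relIndex T ≠ 0 := by
  rw [← relIndex_comap, comap_map_eq] at h
  have hker : S.relIndex (S ⊔ f.ker) ≠ 0 := by
    rw [sup_comm, relIndex_sup_right]
    exact ne_zero_of_dvd_ne_zero Nat.card_pos.ne' (relIndex_dvd_card S f.ker)
  exact relIndex_ne_zero_trans hker h

@[to_additive]
theorem relIndex_ne_zero_of_map_comap (p : K →* G) (q : K →* H) [Finite p.ker]
    [q.range.FiniteIndex] {B₁ B₂ : Subgroup H}
    (h : ((B₁.comap q).map p).relIndex ((B₂.comap q).map p) ≠ 0) : B₁.relIndex B₂ ≠ 0 := by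
  have hcomap := relIndex_ne_zero_of_map_map p h
  have hinter := relIndex_map_map_ne_zero q hcomap
  rw [map_comap_eq, map_comap_eq, inf_comm, inf_comm q.range] at hinter
  exact relIndex_ne_zero_of_inter hinter

end CommGroup

end Subgroup

namespace QH

variable {G H : Type*} [AddCommGroup G] [AddCommGroup H]

variable (R : AddSubgroup (G × H))

def projFst : R →+ G := (AddMonoidHom.fst G H).comp R.subtype

def projSnd : R →+ H := (AddMonoidHom.snd G H).comp R.subtype

theorem range_projFst : (projFst R).range = dom R := by
  rw [projFst, AddMonoidHom.range_comp, AddSubgroup.range_subtype]; rfl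

theorem range_projSnd : (projSnd R).range = img R := by
  rw [projSnd, AddMonoidHom.range_comp, AddSubgroup.range_subtype]; rfl

theorem relPreimg_eq_map_comap (B : AddSubgroup H) :
    relPreimg R B = (B.comap (projSnd R)).map (projFst R) := by
  ext a
  simp [relPreimg, dom, projFst, projSnd, AddSubgroup.mem_prod, and_comm]

theorem relImg_eq_map_comap (A : AddSubgroup G) :
    relImg R A = (A.comap (projFst R)).map (projSnd R) := by
  ext b
  simp [relImg, img, projFst, projSnd, AddSubgroup.mem_prod, and_comm]

theorem finite_ker_projFst (h : (coker R : Set H).Finite) : Finite (projFst R).ker := by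
  have := h.to_subtype
  refine Finite.of_injective (fun x => (⟨(x : R).1.2, ?_⟩ : coker R)) ?_
  · obtain ⟨⟨⟨a, b⟩, hR⟩, ha⟩ := x
    obtain rfl : a = 0 := ha
    exact hR
  · rintro ⟨⟨⟨a, b⟩, _⟩, ha⟩ ⟨⟨⟨a', b'⟩, _⟩, ha'⟩ hb
    obtain rfl : a = 0 := ha
    obtain rfl : a' = 0 := ha'
    obtain rfl : b = b' := congrArg Subtype.val hb
    rfl

theorem finite_ker_projSnd (h : (ker R : Set G).Finite) : Finite (projSnd R).ker := by
  have := h.to_subtype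
  refine Finite.of_injective (fun x => (⟨(x : R).1.1, ?_⟩ : ker R)) ?_
  · obtain ⟨⟨⟨a, b⟩, hR⟩, hb⟩ := x
    obtain rfl : b = 0 := hb
    exact hR
  · rintro ⟨⟨⟨a, b⟩, _⟩, hb⟩ ⟨⟨⟨a', b'⟩, _⟩, hb'⟩ ha
    obtain rfl : b = 0 := hb
    obtain rfl : b' = 0 := hb'
    obtain rfl : a = a' := congrArg Subtype.val ha
    rfl

theorem relIndex_ne_zero_of_relPreimg (hcoker : (coker R : Set H).Finite)
    (himg : (img R).FiniteIndex) {B₁ B₂ : AddSubgroup H}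
    (h : (relPreimg R B₁).relIndex (relPreimg R B₂) ≠ 0) : B₁.relIndex B₂ ≠ 0 := by
  have := finite_ker_projFst R hcoker
  have : (projSnd R).range.FiniteIndex := range_projSnd R ▸ himg
  rw [relPreimg_eq_map_comap, relPreimg_eq_map_comap] at h
  exact AddSubgroup.relIndex_ne_zero_of_map_comap _ _ h

theorem relIndex_ne_zero_of_relImg (hker : (ker R : Set G).Finite)
    (hdom : (dom R).FiniteIndex) {A₁ A₂ : AddSubgroup G}
    (h : (relImg R A₁).relIndex (relImg R A₂) ≠ 0) : A₁.relIndex A₂ ≠ 0 := by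
  have := finite_ker_projSnd R hker
  have : (projFst R).range.FiniteIndex := range_projFst R ▸ hdom
  rw [relImg_eq_map_comap, relImg_eq_map_comap] at h
  exact AddSubgroup.relIndex_ne_zero_of_map_comap _ _ h

theorem relImg_relPreimg_infinite_relindex_general (f g : AddSubgroup (G × H))
    (hcoker : ((coker g : Set H)).Finite) (himg : (img g).FiniteIndex)
    (hker : ((ker f : Set G)).Finite) (hdom : (dom f).FiniteIndex)
    (H₁ H₂ : AddSubgroup H) (hidx : H₁.relIndex H₂ = 0) :
    (relImg f (relPreimg g H₁)).relIndex (relImg f (relPreimg g H₂)) = 0 := by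
  by_contra h
  exact relIndex_ne_zero_of_relPreimg g hcoker himg
    (relIndex_ne_zero_of_relImg f hker hdom h) hidx

/-- if `coker g` is finite, `im g` has finite index in `H`, `ker f` is
finite and `dom f` has finite index in `G`, and `H₁ ≤ H₂ ≤ H` with `H₁` of infinite index
in `H₂`, then `f[g⁻¹[H₁]]` has infinite index in `f[g⁻¹[H₂]]`. -/
theorem relImg_relPreimg_infinite_relindex (f g : AddSubgroup (G × H))
    (hcoker : ((coker g : Set H)).Finite) (himg : (img g).FiniteIndex)
    (hker : ((ker f : Set G)).Finite) (hdom : (dom f).FiniteIndex)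
    (H₁ H₂ : AddSubgroup H) (hle : H₁ ≤ H₂) (hidx : H₁.relIndex H₂ = 0) :
    (relImg f (relPreimg g H₁)).relIndex (relImg f (relPreimg g H₂)) = 0 :=
  relImg_relPreimg_infinite_relindex_general f g hcoker himg hker hdom H₁ H₂ hidx

end QH
end

section
/- Let λ : G × H ⇀ K be a bilinear quasi-form and let g, g' ∈ G be such that ann_H(g') ⪅ ann_H(g) and im λ_g ⪅ im λ_{g'}. Consider the additive relation λ_{g,g'} = {(h,h') ∈ H × H : λ(g,h) and λ(g',h') are both defined and equal}. Then the relation λ̄_{g,g'} on the quotient H/ann_H(g'), defined by (x + ann_H(g'), y + ann_H(g')) ∈ λ̄_{g,g'} if and only if (x', y) ∈ λ_{g,g'} for some x' ∈ x + ann_H(g'), is well defined (independent of the representative y of its coset) and is a quasi-endomorphism of H/ann_H(g'), i.e. its domain has finite index in H/ann_H(g') and its cokernel is finite. -/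
namespace BQF

variable {G H K : Type*} [AddCommGroup G] [AddCommGroup H] [AddCommGroup K]

/-- `X` is almost contained in `Y` (written `X ⪅ Y`) if `X ∩ Y` has finite index in `X`. -/
def AlmostLE {A : Type*} [AddCommGroup A] (X Y : AddSubgroup A) : Prop :=
  (X ⊓ Y).relIndex X ≠ 0

/-- A bilinear quasi-form `λ : G × H ⇀ K`: a partial function such that every
`λ_g = λ(g,·)` is a group homomorphism defined exactly on a finite-index subgroup
`domLeft g ≤ H`, and every `λ'_h = λ(·,h)` is a group homomorphism defined exactly on a
finite-index subgroup `domRight h ≤ G`.  The value `toFun g h` is only meaningful when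
`h ∈ domLeft g` (equivalently, `g ∈ domRight h`). -/
structure BilinQuasiForm (G H K : Type*)
    [AddCommGroup G] [AddCommGroup H] [AddCommGroup K] where
  toFun : G → H → K
  domLeft : G → AddSubgroup H
  domRight : H → AddSubgroup G
  dom_compat : ∀ g h, h ∈ domLeft g ↔ g ∈ domRight h
  finiteIndex_left : ∀ g, (domLeft g).FiniteIndex
  finiteIndex_right : ∀ h, (domRight h).FiniteIndex
  add_left : ∀ g, ∀ h ∈ domLeft g, ∀ h' ∈ domLeft g,
    toFun g (h + h') = toFun g h + toFun g h'
  add_right : ∀ h, ∀ g ∈ domRight h, ∀ g' ∈ domRight h,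
    toFun (g + g') h = toFun g h + toFun g' h

namespace BilinQuasiForm

variable (lam : BilinQuasiForm G H K)

theorem toFun_zero_left (g : G) : lam.toFun g 0 = 0 := by
  have h0 := lam.add_left g 0 (lam.domLeft g).zero_mem 0 (lam.domLeft g).zero_mem
  rw [add_zero] at h0
  exact (left_eq_add.mp h0)

theorem toFun_zero_right (h : H) : lam.toFun 0 h = 0 := by
  have h0 := lam.add_right h 0 (lam.domRight h).zero_mem 0 (lam.domRight h).zero_mem
  rw [add_zero] at h0
  exact (left_eq_add.mp h0)

theorem toFun_neg_left (g : G) (h : H) (hh : h ∈ lam.domLeft g) :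
    lam.toFun g (-h) = -lam.toFun g h := by
  have h0 := lam.add_left g h hh (-h) ((lam.domLeft g).neg_mem hh)
  rw [add_neg_cancel, lam.toFun_zero_left] at h0
  exact eq_neg_of_add_eq_zero_right h0.symm

theorem toFun_neg_right (g : G) (h : H) (hg : g ∈ lam.domRight h) :
    lam.toFun (-g) h = -lam.toFun g h := by
  have h0 := lam.add_right h g hg (-g) ((lam.domRight h).neg_mem hg)
  rw [add_neg_cancel, lam.toFun_zero_right] at h0
  exact eq_neg_of_add_eq_zero_right h0.symm

/-- `ann_H(g) = ker λ_g`. -/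
def annH (g : G) : AddSubgroup H where
  carrier := {h | h ∈ lam.domLeft g ∧ lam.toFun g h = 0}
  zero_mem' := ⟨(lam.domLeft g).zero_mem, lam.toFun_zero_left g⟩
  add_mem' := by
    rintro a b ⟨ha, ha0⟩ ⟨hb, hb0⟩
    exact ⟨(lam.domLeft g).add_mem ha hb,
      by rw [lam.add_left g a ha b hb, ha0, hb0, add_zero]⟩
  neg_mem' := by
    rintro a ⟨ha, ha0⟩
    exact ⟨(lam.domLeft g).neg_mem ha,
      by rw [lam.toFun_neg_left g a ha, ha0, neg_zero]⟩

/-- `ann_G(h) = ker λ'_h`. -/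
def annG (h : H) : AddSubgroup G where
  carrier := {g | g ∈ lam.domRight h ∧ lam.toFun g h = 0}
  zero_mem' := ⟨(lam.domRight h).zero_mem, lam.toFun_zero_right h⟩
  add_mem' := by
    rintro a b ⟨ha, ha0⟩ ⟨hb, hb0⟩
    exact ⟨(lam.domRight h).add_mem ha hb,
      by rw [lam.add_right h a ha b hb, ha0, hb0, add_zero]⟩
  neg_mem' := by
    rintro a ⟨ha, ha0⟩
    exact ⟨(lam.domRight h).neg_mem ha,
      by rw [lam.toFun_neg_right a h ha, ha0, neg_zero]⟩

/-- `im λ_g`. -/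
def imLeft (g : G) : AddSubgroup K where
  carrier := {k | ∃ h ∈ lam.domLeft g, lam.toFun g h = k}
  zero_mem' := ⟨0, (lam.domLeft g).zero_mem, lam.toFun_zero_left g⟩
  add_mem' := by
    rintro a b ⟨h1, hh1, rfl⟩ ⟨h2, hh2, rfl⟩
    exact ⟨h1 + h2, (lam.domLeft g).add_mem hh1 hh2, lam.add_left g h1 hh1 h2 hh2⟩
  neg_mem' := by
    rintro a ⟨h1, hh1, rfl⟩
    exact ⟨-h1, (lam.domLeft g).neg_mem hh1, lam.toFun_neg_left g h1 hh1⟩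

/-- The additive relation `λ_{g,g'} = {(h,h') : λ(g,h), λ(g',h') both defined and equal}`. -/
def pairRel (g g' : G) : AddSubgroup (H × H) where
  carrier := {p | p.1 ∈ lam.domLeft g ∧ p.2 ∈ lam.domLeft g' ∧
    lam.toFun g p.1 = lam.toFun g' p.2}
  zero_mem' := ⟨(lam.domLeft g).zero_mem, (lam.domLeft g').zero_mem, by
    show lam.toFun g (0 : H) = lam.toFun g' (0 : H)
    rw [lam.toFun_zero_left, lam.toFun_zero_left]⟩
  add_mem' := by
    rintro ⟨a, b⟩ ⟨c, d⟩ ⟨ha, hb, he⟩ ⟨hc, hd, he'⟩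
    refine ⟨(lam.domLeft g).add_mem ha hc, (lam.domLeft g').add_mem hb hd, ?_⟩
    show lam.toFun g (a + c) = lam.toFun g' (b + d)
    rw [lam.add_left g a ha c hc, lam.add_left g' b hb d hd, he, he']
  neg_mem' := by
    rintro ⟨a, b⟩ ⟨ha, hb, he⟩
    refine ⟨(lam.domLeft g).neg_mem ha, (lam.domLeft g').neg_mem hb, ?_⟩
    show lam.toFun g (-a) = lam.toFun g' (-b)
    rw [lam.toFun_neg_left g a ha, lam.toFun_neg_left g' b hb, he]

end BilinQuasiForm

/-- Domain of an additive relation. -/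
def relDom {A B : Type*} [AddCommGroup A] [AddCommGroup B]
    (R : AddSubgroup (A × B)) : AddSubgroup A := R.map (AddMonoidHom.fst A B)

/-- Cokernel of an additive relation. -/
def relCoker {A B : Type*} [AddCommGroup A] [AddCommGroup B]
    (R : AddSubgroup (A × B)) : AddSubgroup B := R.comap (AddMonoidHom.inr A B)

/-- A quasi-homomorphism: an additive relation whose domain has finite index and whose
cokernel is finite. -/
def IsQuasiHom {A B : Type*} [AddCommGroup A] [AddCommGroup B]
    (R : AddSubgroup (A × B)) : Prop :=
  (relDom R).FiniteIndex ∧ ((relCoker R : Set B)).Finite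

/-! Modulo `ann_H(g') = ker λ_{g'}`, an element of `dom λ_{g'}` is determined by its value under
`λ_{g'}`. This gives well-definedness, and it embeds the cokernel into `λ_g(ann_H(g'))`, which is
finite because `ann_H(g') ∩ ann_H(g)` has finite index in `ann_H(g')`. The domain contains the
image of `λ_g⁻¹(im λ_{g'})`, of finite index because `im λ_g ∩ im λ_{g'}` has finite index in
`im λ_g`. -/

theorem almostLE_iff {A : Type*} [AddCommGroup A] {X Y : AddSubgroup A} :
    AlmostLE X Y ↔ Y.relIndex X ≠ 0 := by
  rw [AlmostLE, inf_comm, AddSubgroup.inf_relIndex_right]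

theorem finiteIndex_map_of_surjective {A B : Type*} [AddGroup A] [AddGroup B]
    {X : AddSubgroup A} [X.FiniteIndex] {f : A →+ B} (hf : Function.Surjective f) :
    (X.map f).FiniteIndex :=
  ⟨fun h => X.index_ne_zero_of_finite (Nat.eq_zero_of_zero_dvd (h ▸ X.index_map_dvd hf))⟩

section Relations

variable {A B C D : Type*} [AddCommGroup A] [AddCommGroup B] [AddCommGroup C] [AddCommGroup D]

theorem mem_relCoker {R : AddSubgroup (A × B)} {b : B} : b ∈ relCoker R ↔ (0, b) ∈ R :=
  Iff.rfl

theorem mem_map_prodMap {R : AddSubgroup (A × B)} {f : A →+ C} {f' : B →+ D} {c : C} {d : D} :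
    (c, d) ∈ R.map (f.prodMap f') ↔ ∃ a b, f a = c ∧ f' b = d ∧ (a, b) ∈ R := by
  constructor
  · rintro ⟨⟨a, b⟩, hab, he⟩
    exact ⟨a, b, congrArg Prod.fst he, congrArg Prod.snd he, hab⟩
  · rintro ⟨a, b, rfl, rfl, hab⟩
    exact ⟨(a, b), hab, rfl⟩

theorem relDom_map_prodMap (R : AddSubgroup (A × B)) (f : A →+ C) (f' : B →+ D) :
    relDom (R.map (f.prodMap f')) = (relDom R).map f := by
  simp only [relDom, AddSubgroup.map_map]
  rfl

end Relations

namespace BilinQuasiForm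

variable {lam : BilinQuasiForm G H K}

theorem toFun_sub_left (g : G) {a b : H} (ha : a ∈ lam.domLeft g) (hb : b ∈ lam.domLeft g) :
    lam.toFun g (a - b) = lam.toFun g a - lam.toFun g b := by
  rw [sub_eq_add_neg, lam.add_left g a ha (-b) ((lam.domLeft g).neg_mem hb),
    lam.toFun_neg_left g b hb, ← sub_eq_add_neg]

theorem mem_domLeft_and_toFun_eq_of_sub_mem_annH {g : G} {y y' : H} (h : y - y' ∈ lam.annH g)
    (hy' : y' ∈ lam.domLeft g) : y ∈ lam.domLeft g ∧ lam.toFun g y = lam.toFun g y' := by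
  obtain ⟨hd, h0⟩ := h
  have hy : y = (y - y') + y' := (sub_add_cancel y y').symm
  refine ⟨hy ▸ (lam.domLeft g).add_mem hd hy', ?_⟩
  rw [hy, lam.add_left g _ hd _ hy', h0, zero_add]

theorem mk_eq_of_toFun_eq {g : G} {v w : H} (hv : v ∈ lam.domLeft g) (hw : w ∈ lam.domLeft g)
    (h : lam.toFun g v = lam.toFun g w) : (v : H ⧸ lam.annH g) = w :=
  QuotientAddGroup.eq_iff_sub_mem.mpr
    ⟨(lam.domLeft g).sub_mem hv hw, by rw [toFun_sub_left g hv hw, h, sub_self]⟩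

theorem mem_pairRel_congr_right {g g' : G} {x y y' : H} (h : y - y' ∈ lam.annH g') :
    (x, y) ∈ lam.pairRel g g' ↔ (x, y') ∈ lam.pairRel g g' := by
  have h' : y' - y ∈ lam.annH g' := neg_sub y y' ▸ (lam.annH g').neg_mem h
  constructor
  · rintro ⟨hx, hy, hxy⟩
    obtain ⟨hy', hyy'⟩ := mem_domLeft_and_toFun_eq_of_sub_mem_annH h' hy
    exact ⟨hx, hy', hxy.trans hyy'.symm⟩
  · rintro ⟨hx, hy', hxy'⟩
    obtain ⟨hy, hyy'⟩ := mem_domLeft_and_toFun_eq_of_sub_mem_annH h hy'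
    exact ⟨hx, hy, hxy'.trans hyy'.symm⟩

variable (lam) in
def homLeft (g : G) : lam.domLeft g →+ K where
  toFun h := lam.toFun g h
  map_zero' := lam.toFun_zero_left g
  map_add' a b := lam.add_left g a a.2 b b.2

theorem range_homLeft (g : G) : (lam.homLeft g).range = lam.imLeft g := by
  ext k
  constructor
  · rintro ⟨h, rfl⟩
    exact ⟨h, h.2, rfl⟩
  · rintro ⟨h, hh, rfl⟩
    exact ⟨⟨h, hh⟩, rfl⟩

theorem ker_homLeft (g : G) :
    (lam.homLeft g).ker = (lam.annH g).addSubgroupOf (lam.domLeft g) := by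
  ext h
  exact ⟨fun h0 => ⟨h.2, h0⟩, fun h0 => h0.2⟩

theorem finiteIndex_relDom_pairRel {g g' : G} (h : AlmostLE (lam.imLeft g) (lam.imLeft g')) :
    (relDom (lam.pairRel g g')).FiniteIndex := by
  set D := ((lam.imLeft g').comap (lam.homLeft g)).map (lam.domLeft g).subtype
  have hD : D.FiniteIndex := by
    have := lam.finiteIndex_left g
    rw [AddSubgroup.finiteIndex_iff, AddSubgroup.index_map_subtype, AddSubgroup.index_comap,
      range_homLeft]
    exact mul_ne_zero (almostLE_iff.mp h) (lam.domLeft g).index_ne_zero_of_finite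
  refine AddSubgroup.finiteIndex_of_le (H := D) ?_
  rintro - ⟨u, ⟨v, hv, hvu⟩, rfl⟩
  exact ⟨(u, v), ⟨u.2, hv, hvu.symm⟩, rfl⟩

theorem finite_image_toFun {g : G} {N : AddSubgroup H} (h : AlmostLE N (lam.annH g)) :
    (lam.toFun g '' (N ⊓ lam.domLeft g : AddSubgroup H)).Finite := by
  have hcard : Nat.card ((N.addSubgroupOf (lam.domLeft g)).map (lam.homLeft g)) ≠ 0 := by
    rw [← AddSubgroup.relIndex_ker, ker_homLeft, ← AddSubgroup.inf_addSubgroupOf_right N,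
      AddSubgroup.relIndex_addSubgroupOf inf_le_right]
    exact fun h0 => almostLE_iff.mp h (AddSubgroup.relIndex_eq_zero_of_le_right inf_le_left h0)
  have := Nat.finite_of_card_ne_zero hcard
  refine (Set.toFinite ((N.addSubgroupOf (lam.domLeft g)).map (lam.homLeft g) : Set K)).subset ?_
  rintro - ⟨u, ⟨huN, hud⟩, rfl⟩
  exact ⟨⟨u, hud⟩, huN, rfl⟩

theorem finite_relCoker_map_mk {g g' : G} (h : AlmostLE (lam.annH g') (lam.annH g)) :
    let mk := QuotientAddGroup.mk' (lam.annH g')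
    (relCoker ((lam.pairRel g g').map (mk.prodMap mk)) : Set (H ⧸ lam.annH g')).Finite := by
  intro mk
  have fiber_subsingleton (k : K) :
      {b | ∃ v ∈ lam.domLeft g', mk v = b ∧ lam.toFun g' v = k}.Subsingleton := by
    rintro - ⟨v, hv, rfl, rfl⟩ - ⟨w, hw, rfl, hvw⟩
    exact mk_eq_of_toFun_eq hv hw hvw.symm
  refine ((finite_image_toFun h).biUnion fun k _ => (fiber_subsingleton k).finite).subset ?_
  intro b hb
  obtain ⟨u, v, hu, rfl, huv, hv, heq⟩ := mem_map_prodMap.mp (mem_relCoker.mp hb)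
  have huN : u ∈ lam.annH g' := (QuotientAddGroup.eq_zero_iff u).mp hu
  exact Set.mem_biUnion ⟨u, ⟨huN, huv⟩, rfl⟩ ⟨v, hv, rfl, heq.symm⟩

end BilinQuasiForm

/-- if `ann_H(g') ⪅ ann_H(g)` and `im λ_g ⪅ im λ_{g'}`, then the relation
`λ̄_{g,g'}` induced by `λ_{g,g'}` on `H/ann_H(g')` is well defined (independent of the
representative `y` of its coset) and is a quasi-endomorphism of `H/ann_H(g')`. -/
theorem pairRel_induces_quasiEndo (lam : BilinQuasiForm G H K) (g g' : G)
    (h1 : AlmostLE (lam.annH g') (lam.annH g))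
    (h2 : AlmostLE (lam.imLeft g) (lam.imLeft g')) :
    (∀ x y y' : H, y - y' ∈ lam.annH g' →
      ((∃ x' : H, x' - x ∈ lam.annH g' ∧ (x', y) ∈ lam.pairRel g g') ↔
       (∃ x' : H, x' - x ∈ lam.annH g' ∧ (x', y') ∈ lam.pairRel g g'))) ∧
    ∃ R : AddSubgroup ((H ⧸ lam.annH g') × (H ⧸ lam.annH g')),
      (∀ a b : H ⧸ lam.annH g',
        (a, b) ∈ R ↔ ∃ x y : H, QuotientAddGroup.mk x = a ∧ QuotientAddGroup.mk y = b ∧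
          (x, y) ∈ lam.pairRel g g') ∧
      IsQuasiHom R := by
  let mk := QuotientAddGroup.mk' (lam.annH g')
  refine ⟨fun x y y' hy => exists_congr fun x' => and_congr_right fun _ =>
    BilinQuasiForm.mem_pairRel_congr_right hy, (lam.pairRel g g').map (mk.prodMap mk),
    fun a b => mem_map_prodMap, ?_, BilinQuasiForm.finite_relCoker_map_mk h1⟩
  have := BilinQuasiForm.finiteIndex_relDom_pairRel h2
  rw [relDom_map_prodMap]
  exact finiteIndex_map_of_surjective (QuotientAddGroup.mk'_surjective _)

end BQF
end

section
/- Let λ : G × H ⇀ K be a bilinear quasi-form and let A be a subgroup of G. Then the almost annihilator aann_H(A) = {h ∈ H : A ⪅ ann_G(h)} is a subgroup of H, and it equals {h ∈ H : λ'_h[A ∩ dom λ'_h] is finite}. -/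
/-!
On `A ∩ dom λ'_h` the map `λ'_h` is a homomorphism with kernel `A ∩ ann_G(h)`, so its image is
finite iff that kernel has finite index in `A ∩ dom λ'_h`; as `dom λ'_h` has finite index in `G`,
this is the same as finite index in `A`. The almost annihilator is a subgroup because
`ann_G(h) ∩ ann_G(h') ≤ ann_G(h + h')` and finite-index subgroups of `A` are closed under `⊓`.
-/

namespace BQF

variable {G H K : Type*} [AddCommGroup G] [AddCommGroup H] [AddCommGroup K]

theorem almostLE_of_le {X Y : AddSubgroup G} (h : X ≤ Y) : AlmostLE X Y := by
  rw [AlmostLE, inf_eq_left.mpr h, AddSubgroup.relIndex_self]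
  exact one_ne_zero

theorem almostLE_of_finiteIndex (X : AddSubgroup G) {Y : AddSubgroup G} [Y.FiniteIndex] :
    AlmostLE X Y := by
  rw [AlmostLE, AddSubgroup.inf_relIndex_left]
  exact AddSubgroup.isFiniteRelIndex_of_finiteIndex.relIndex_ne_zero

theorem AlmostLE.trans_le {X Y Z : AddSubgroup G} (hXY : AlmostLE X Y) (hYZ : Y ≤ Z) :
    AlmostLE X Z :=
  mt (AddSubgroup.relIndex_eq_zero_of_le_left (inf_le_inf_left X hYZ)) hXY

theorem AlmostLE.inf {X Y Z : AddSubgroup G} (hY : AlmostLE X Y) (hZ : AlmostLE X Z) :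
    AlmostLE X (Y ⊓ Z) := by
  rw [AlmostLE, inf_inf_distrib_left]
  exact AddSubgroup.relIndex_inf_ne_zero hY hZ

theorem almostLE_iff_inf_of_le {X Y Z : AddSubgroup G} (hY : AlmostLE X Y) (hZ : Z ≤ Y) :
    AlmostLE X Z ↔ AlmostLE (X ⊓ Y) Z := by
  have hXYZ : X ⊓ Y ⊓ Z = X ⊓ Z := by rw [inf_assoc, inf_eq_right.mpr hZ]
  rw [AlmostLE, AlmostLE, hXYZ, ← AddSubgroup.relIndex_mul_relIndex (X ⊓ Z) (X ⊓ Y) X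
    (inf_le_inf_left X hZ) inf_le_left, mul_ne_zero_iff]
  exact and_iff_left hY

theorem almostLE_iff_finite_range {X Y : AddSubgroup G} (f : X →+ K)
    (hf : ∀ x : X, f x = 0 ↔ (x : G) ∈ Y) : AlmostLE X Y ↔ (Set.range f).Finite := by
  have hker : Y.addSubgroupOf X = f.ker := by
    ext x
    exact (hf x).symm
  rw [AlmostLE, AddSubgroup.inf_relIndex_left, AddSubgroup.relIndex, hker,
    AddSubgroup.index_ker, Nat.card_ne_zero, ← AddMonoidHom.coe_range]
  exact (and_iff_right ⟨0⟩).trans Set.finite_coe_iff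

namespace BilinQuasiForm

variable (lam : BilinQuasiForm G H K)

theorem annG_zero : lam.annG 0 = ⊤ :=
  eq_top_iff.mpr fun g _ =>
    ⟨(lam.dom_compat g 0).mp (lam.domLeft g).zero_mem, lam.toFun_zero_left g⟩

theorem annG_inf_annG_le_annG_add (h h' : H) :
    lam.annG h ⊓ lam.annG h' ≤ lam.annG (h + h') := by
  rintro g ⟨⟨hg, hgh⟩, ⟨hg', hgh'⟩⟩
  rw [← lam.dom_compat] at hg hg'
  refine ⟨(lam.dom_compat g _).mp ((lam.domLeft g).add_mem hg hg'), ?_⟩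
  rw [lam.add_left g h hg h' hg', hgh, hgh', add_zero]

theorem annG_le_annG_neg (h : H) : lam.annG h ≤ lam.annG (-h) := by
  rintro g ⟨hg, hgh⟩
  rw [← lam.dom_compat] at hg
  refine ⟨(lam.dom_compat g _).mp ((lam.domLeft g).neg_mem hg), ?_⟩
  rw [lam.toFun_neg_left g h hg, hgh, neg_zero]

theorem annG_le_domRight (h : H) : lam.annG h ≤ lam.domRight h := fun _ hg => hg.1

def almostAnnihilator (A : AddSubgroup G) : AddSubgroup H where
  carrier := {h | AlmostLE A (lam.annG h)}
  zero_mem' := by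
    rw [Set.mem_ofPred_eq, annG_zero]
    exact almostLE_of_le le_top
  add_mem' hh hh' := (hh.inf hh').trans_le (lam.annG_inf_annG_le_annG_add _ _)
  neg_mem' hh := hh.trans_le (lam.annG_le_annG_neg _)

def restrictRight (h : H) (B : AddSubgroup G) (hB : B ≤ lam.domRight h) : B →+ K where
  toFun g := lam.toFun g h
  map_zero' := lam.toFun_zero_right h
  map_add' g g' := lam.add_right h g (hB g.2) g' (hB g'.2)

theorem almostLE_annG_iff_finite_image (A : AddSubgroup G) (h : H) :
    AlmostLE A (lam.annG h) ↔
      ((fun g => lam.toFun g h) '' ((A : Set G) ∩ (lam.domRight h : Set G))).Finite := by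
  have := lam.finiteIndex_right h
  rw [almostLE_iff_inf_of_le (almostLE_of_finiteIndex A) (lam.annG_le_domRight h),
    almostLE_iff_finite_range (lam.restrictRight h _ inf_le_right)
      fun g => (and_iff_right g.2.2).symm, ← AddSubgroup.coe_inf, Set.image_eq_range]
  rfl

end BilinQuasiForm

/-- the almost annihilator `aann_H(A) = {h : A ⪅ ann_G(h)}` is a subgroup of
`H`, and it equals `{h : λ'_h[A ∩ dom λ'_h] is finite}`. -/
theorem almostAnnihilator_subgroup (lam : BilinQuasiForm G H K) (A : AddSubgroup G) :
    ∃ S : AddSubgroup H,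
      (S : Set H) = {h : H | AlmostLE A (lam.annG h)} ∧
      (S : Set H) = {h : H |
        Set.Finite ((fun g => lam.toFun g h) '' ((A : Set G) ∩ (lam.domRight h : Set G)))} :=
  ⟨lam.almostAnnihilator A, rfl, Set.ext fun h => lam.almostLE_annG_iff_finite_image A h⟩

end BQF
end

section
/- Let λ : G × H ⇀ K be a bilinear quasi-form for which there is d < ω with |H : dom λ_g| ≤ d for all g ∈ G and |G : dom λ'_h| ≤ d for all h ∈ H. Then the image of λ is contained in a finite subgroup of K if and only if there is ℓ < ω such that |H : ann_H(g)| ≤ ℓ for all g ∈ G and |G : ann_G(h)| ≤ ℓ for all h ∈ H. -/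
/-!
If all values lie in a finite subgroup `F`, then `|H : ann_H(g)| = |im λ_g| * |H : dom λ_g|`
is at most `|F| * d`. Conversely, bounded annihilators make every row `im λ_g` a group of at
most `ℓ` elements, so all values are torsion and it suffices to show that there are finitely
many of them. Otherwise one picks pairs `(g_t, h_t)` with distinct values that are orthogonal
(`λ(g_s, h_t) = 0 = λ(g_t, h_s)` for `s < t`), and the row of `g_0 + ⋯ + g_ℓ` contains the
`ℓ + 1` values `λ(g_t, h_t)`. The next pair can be found in `⋂ ann_G(h_s) × ⋂ ann_H(g_s)`
because finitely many values on a product `E × D` of finite-index subgroups force finitely many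
values overall. That step runs the same row-counting argument on `E × (σ₀ + D)`, with values
distinct modulo the finite group generated by the values on `E × D` and on the column of `σ₀`
instead of orthogonality; the partial domains are handled by summing blocks of `d!` elements
that, by Ramsey's theorem, lie in a common coset of each relevant `dom λ'_h`.
-/

namespace BQF

variable {G H K : Type*} [AddCommGroup G] [AddCommGroup H] [AddCommGroup K]

open Filter Finset

theorem finite_closure_of_isOfFinAddOrder {S : Set K} (hS : S.Finite)
    (hS_tors : ∀ x ∈ S, IsOfFinAddOrder x) : (AddSubgroup.closure S : Set K).Finite := by
  have : Finite S := hS.to_subtype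
  have : Finite (AddSubgroup.closure S) :=
    AddCommGroup.finite_of_fg_isAddTorsion _ fun x => AddSubmonoid.isOfFinAddOrder_coe.mp <|
      (AddSubgroup.closure_le (AddCommGroup.torsion K)).mpr hS_tors x.2
  exact Set.toFinite _

theorem sum_mem_of_forall_sub_mem {ι : Type*} (A : AddSubgroup G) (s : Finset ι) (w : ι → G)
    (hw : ∀ i ∈ s, ∀ j ∈ s, w i - w j ∈ A) (hs : A.index ∣ #s) : ∑ i ∈ s, w i ∈ A := by
  rcases s.eq_empty_or_nonempty with rfl | ⟨i₀, hi₀⟩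
  · exact sum_empty (f := w) ▸ A.zero_mem
  obtain ⟨k, hk⟩ := hs
  have hsplit : ∑ i ∈ s, w i = ∑ i ∈ s, (w i - w i₀) + k • A.index • w i₀ := by
    rw [sum_sub_distrib, sum_const, smul_smul, mul_comm, ← hk]
    abel
  rw [hsplit]
  exact A.add_mem (A.sum_mem fun i hi => hw i hi i₀ hi₀) (A.nsmul_mem (A.nsmul_index_mem _) k)

theorem exists_fin_coloring_of_index_le {d : ℕ} (A : AddSubgroup G) [A.FiniteIndex]
    (hA : A.index ≤ d) : ∃ c : G → Fin d, ∀ a b, c a = c b → a - b ∈ A := by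
  have : Fintype (G ⧸ A) := Fintype.ofFinite _
  have hcard : Fintype.card (G ⧸ A) ≤ d := by
    rwa [← Nat.card_eq_fintype_card, ← AddSubgroup.index_eq_card]
  refine ⟨fun a => Fin.castLE hcard (Fintype.equivFin _ a), fun a b hab => ?_⟩
  exact QuotientAddGroup.eq_iff_sub_mem.mp
    ((Fintype.equivFin _).injective (Fin.castLE_injective hcard hab))

theorem exists_strictMono_monochromatic {C : Type*} [Finite C] (c : ℕ → ℕ → C) :
    ∃ f : ℕ → ℕ, StrictMono f ∧ ∃ col, ∀ i j, i < j → c (f i) (f j) = col := by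
  have limit : ∀ u : ℕ → C, ∃ a, {n | u n = a} ∈ hyperfilter ℕ := fun u => by
    obtain ⟨a, ha⟩ := ((hyperfilter ℕ).map u).eq_pure_of_finite
    exact ⟨a, show {a} ∈ (hyperfilter ℕ).map u by rw [ha]; rfl⟩
  choose lim hlim using fun m => limit (c m)
  obtain ⟨col, hcol⟩ := limit lim
  obtain ⟨f, -, hf⟩ := exists_seq_of_forall_finset_exists (fun m => lim m = col)
    (fun m n => m < n ∧ c m n = col) fun s hs => by
      have hmem : {n | lim n = col} ∩ ⋂ m ∈ s, (Set.Ioi m ∩ {n | c m n = col}) ∈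
          hyperfilter ℕ :=
        inter_mem hcol <| (biInter_finset_mem s).mpr fun m hm => inter_mem
          (Set.compl_Iic (a := m) ▸ compl_mem_hyperfilter_of_finite (Set.finite_Iic m))
          (hs m hm ▸ hlim m)
      obtain ⟨n, hn, hns⟩ := Ultrafilter.nonempty_of_mem hmem
      exact ⟨n, hn, fun m hm => Set.mem_iInter₂.mp hns m hm⟩
  exact ⟨f, strictMono_nat_of_lt_succ fun n => (hf n (n + 1) n.lt_succ_self).1, col,
    fun i j hij => (hf i j hij).2⟩

theorem exists_strictMono_sub_mem {ι : Type*} {d : ℕ} (A : ι → AddSubgroup G)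
    (hA_fin : ∀ τ, (A τ).FiniteIndex) (hA : ∀ τ, (A τ).index ≤ d)
    (w : ℕ → G) (τ : ℕ → ι) (τ₀ : ι) :
    ∃ f : ℕ → ℕ, StrictMono f ∧
      (∀ i i' j, i < j → i' < j → w (f i) - w (f i') ∈ A (τ (f j))) ∧
      (∀ i j j', i < j → i < j' → w (f j) - w (f j') ∈ A (τ (f i))) ∧
      ∀ i i', w (f i) - w (f i') ∈ A τ₀ := by
  choose c hc using fun τ => exists_fin_coloring_of_index_le (A τ) (hA τ)
  obtain ⟨f, hf, col, hcol⟩ :=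
    exists_strictMono_monochromatic fun i j => (c (τ j) (w i), c (τ i) (w j), c τ₀ (w i))
  refine ⟨f, hf, fun i i' j hi hi' => hc _ _ _ ?_, fun i j j' hj hj' => hc _ _ _ ?_,
    fun i i' => hc _ _ _ ?_⟩
  · exact congrArg Prod.fst ((hcol i j hi).trans (hcol i' j hi').symm)
  · exact congrArg (·.2.1) ((hcol i j hj).trans (hcol i j' hj').symm)
  · exact congrArg (·.2.2) ((hcol i (max i i' + 1) (by omega)).trans
      (hcol i' (max i i' + 1) (by omega)).symm)

theorem exists_seq_sub_notMem {α : Type*} (P : α → Prop) (v : α → K) {Φ : Set K}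
    (hΦ : Φ.Finite) (hv : (v '' {a | P a}).Infinite) :
    ∃ f : ℕ → α, (∀ n, P (f n)) ∧ ∀ m n, m < n → v (f n) - v (f m) ∉ Φ := by
  refine exists_seq_of_forall_finset_exists P (fun a b => v b - v a ∉ Φ) fun s _ => ?_
  by_contra! hs
  refine hv ((((s : Set α).toFinite.image v).image2 (· + ·) hΦ).subset ?_)
  rintro _ ⟨a, ha, rfl⟩
  obtain ⟨b, hb, hab⟩ := hs a ha
  exact ⟨v b, ⟨b, hb, rfl⟩, _, hab, add_sub_cancel _ _⟩

namespace BilinQuasiForm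

variable (lam : BilinQuasiForm G H K)

def flip : BilinQuasiForm H G K where
  toFun h g := lam.toFun g h
  domLeft := lam.domRight
  domRight := lam.domLeft
  dom_compat h g := (lam.dom_compat g h).symm
  finiteIndex_left := lam.finiteIndex_right
  finiteIndex_right := lam.finiteIndex_left
  add_left := lam.add_right
  add_right := lam.add_left

def leftHom (g : G) : lam.domLeft g →+ K where
  toFun h := lam.toFun g h
  map_zero' := lam.toFun_zero_left g
  map_add' a b := lam.add_left g a a.2 b b.2

def valuesOn (s : Set G) (t : Set H) : Set K :=
  (fun p : G × H => lam.toFun p.1 p.2) '' {p | p.1 ∈ s ∧ p.2 ∈ t ∧ p.2 ∈ lam.domLeft p.1}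

variable {lam}

theorem toFun_mem_valuesOn {s : Set G} {t : Set H} {g : G} {h : H} (hg : g ∈ s) (ht : h ∈ t)
    (hh : h ∈ lam.domLeft g) : lam.toFun g h ∈ lam.valuesOn s t :=
  ⟨(g, h), ⟨hg, ht, hh⟩, rfl⟩

theorem valuesOn_flip (s : Set G) (t : Set H) : lam.flip.valuesOn t s = lam.valuesOn s t := by
  ext k
  constructor
  · rintro ⟨⟨h, g⟩, ⟨ht, hs, hdom⟩, rfl⟩
    exact toFun_mem_valuesOn hs ht ((lam.dom_compat g h).mpr hdom)
  · rintro ⟨⟨g, h⟩, ⟨hs, ht, hdom⟩, rfl⟩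
    exact toFun_mem_valuesOn (lam := lam.flip) ht hs ((lam.dom_compat g h).mp hdom)

variable (lam)

theorem index_annH_eq (g : G) :
    (lam.annH g).index = Nat.card (lam.imLeft g) * (lam.domLeft g).index := by
  rw [← AddSubgroup.relIndex_mul_index (fun _ hh => hh.1 : lam.annH g ≤ lam.domLeft g)]
  have hker : (lam.leftHom g).ker = (lam.annH g).addSubgroupOf (lam.domLeft g) := by
    ext h
    exact ⟨fun hh => ⟨h.2, hh⟩, fun hh => hh.2⟩
  have hrange : (lam.leftHom g).range = lam.imLeft g := by
    ext k
    exact ⟨fun ⟨h, hh⟩ => ⟨h, h.2, hh⟩, fun ⟨h, hh, hk⟩ => ⟨⟨h, hh⟩, hk⟩⟩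
  rw [AddSubgroup.relIndex, ← hker, AddSubgroup.index_ker, hrange]

variable {lam}

theorem index_annH_le_of_imLeft_le {g : G} {d : ℕ} {F : AddSubgroup K} [Finite F]
    (hF : lam.imLeft g ≤ F) (hd : (lam.domLeft g).index ≤ d) :
    (lam.annH g).index ≠ 0 ∧ (lam.annH g).index ≤ Nat.card F * d := by
  have : Finite (lam.imLeft g) := Finite.of_injective _ (AddSubgroup.inclusion_injective hF)
  rw [lam.index_annH_eq]
  exact ⟨mul_ne_zero Nat.card_pos.ne' (lam.finiteIndex_left g).index_ne_zero,
    Nat.mul_le_mul (Nat.card_le_card_of_injective _ (AddSubgroup.inclusion_injective hF)) hd⟩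

theorem finite_imLeft {g : G} (hg : (lam.annH g).index ≠ 0) : (lam.imLeft g : Set K).Finite := by
  rw [lam.index_annH_eq] at hg
  exact Set.finite_coe_iff.mp (Nat.finite_of_card_ne_zero (left_ne_zero_of_mul hg))

theorem isOfFinAddOrder_of_mem_valuesOn (hrow : ∀ g, (lam.annH g).index ≠ 0) {s : Set G}
    {t : Set H} {k : K} (hk : k ∈ lam.valuesOn s t) : IsOfFinAddOrder k := by
  obtain ⟨⟨g, h⟩, ⟨-, -, hh⟩, rfl⟩ := hk
  exact finite_zmultiples.mp <| (finite_imLeft (hrow g)).subset <|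
    (AddSubgroup.zmultiples_le (G := K)).mpr ⟨h, hh, rfl⟩

theorem le_index_annH_of_pairwise_ne {g : G} {n : ℕ} (hg : (lam.annH g).index ≠ 0) (v : ℕ → H)
    (hv : ∀ i < n, v i ∈ lam.domLeft g)
    (hne : ∀ i < n, ∀ j < i, lam.toFun g (v i) ≠ lam.toFun g (v j)) :
    n ≤ (lam.annH g).index := by
  classical
  have hinj : Set.InjOn (fun i => lam.toFun g (v i)) (range n) := fun i hi j hj hij => by
    simp only [coe_range, Set.mem_Iio] at hi hj
    rcases lt_trichotomy i j with hlt | heq | hgt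
    · exact absurd hij.symm (hne j hj i hlt)
    · exact heq
    · exact absurd hij (hne i hi j hgt)
  calc n = #((range n).image fun i => lam.toFun g (v i)) := by
        rw [card_image_of_injOn hinj, card_range]
    _ = ((range n).image fun i => lam.toFun g (v i) : Set K).ncard :=
        (Set.ncard_coe_finset _).symm
    _ ≤ (lam.imLeft g : Set K).ncard := Set.ncard_le_ncard (by
        simp only [coe_image, coe_range, Set.image_subset_iff]
        exact fun i hi => ⟨v i, hv i hi, rfl⟩) (finite_imLeft hg)
    _ = Nat.card (lam.imLeft g) := Nat.card_coe_set_eq _ |>.symm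
    _ ≤ (lam.annH g).index := by
      rw [lam.index_annH_eq]
      exact Nat.le_mul_of_pos_right _ (lam.finiteIndex_left g).index_ne_zero.bot_lt

theorem toFun_sum_right {ι : Type*} (s : Finset ι) (g : ι → G) {h : H}
    (hg : ∀ i ∈ s, g i ∈ lam.domRight h) :
    lam.toFun (∑ i ∈ s, g i) h = ∑ i ∈ s, lam.toFun (g i) h := by
  classical
  induction s using Finset.induction_on with
  | empty => exact lam.toFun_zero_right h
  | insert a s ha ih =>
    rw [sum_insert ha, sum_insert ha, lam.add_right h _ (hg a (mem_insert_self a s)) _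
        (AddSubgroup.sum_mem _ fun i hi => hg i (mem_insert_of_mem hi)),
      ih fun i hi => hg i (mem_insert_of_mem hi)]

theorem toFun_eq_add_toFun_sub {g : G} {σ σ₀ : H} (hσ : σ ∈ lam.domLeft g)
    (hσ₀ : σ₀ ∈ lam.domLeft g) : lam.toFun g σ = lam.toFun g σ₀ + lam.toFun g (σ - σ₀) := by
  rw [← lam.add_left g σ₀ hσ₀ _ ((lam.domLeft g).sub_mem hσ hσ₀), add_sub_cancel]

theorem toFun_sum_sub_toFun_mem {n r j : ℕ} (hn : ∀ τ, (lam.domRight τ).index ∣ n)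
    {E : AddSubgroup G} {D : Set H} {σ₀ : H} {W : ℕ → G} {S : ℕ → H}
    (hW : ∀ i, W i ∈ E) (hS : ∀ i, S i - σ₀ ∈ D) (hdom : ∀ i, S i ∈ lam.domLeft (W i))
    (h_before : ∀ i i' j, i < j → i' < j → W i - W i' ∈ lam.domRight (S j))
    (h_after : ∀ i j j', i < j → i < j' → W j - W j' ∈ lam.domRight (S i))
    (h_base : ∀ i i', W i - W i' ∈ lam.domRight σ₀)
    (hj : j < r) (hnj : n ∣ j) (hnr : n ∣ r - (j + 1)) :
    S j ∈ lam.domLeft (∑ i ∈ range r, W i) ∧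
      lam.toFun (∑ i ∈ range r, W i) (S j) - lam.toFun (W j) (S j) ∈
        AddSubgroup.closure (lam.valuesOn E D ∪ lam.valuesOn Set.univ {σ₀}) := by
  set X := ∑ i ∈ range j, W i + ∑ i ∈ Ico (j + 1) r, W i
  have hx : ∑ i ∈ range r, W i = X + W j := by
    rw [← sum_range_add_sum_Ico _ (Nat.succ_le_of_lt hj), sum_range_succ]
    exact add_right_comm _ _ _
  have hblock : ∀ τ, (∀ i < j, ∀ i' < j, W i - W i' ∈ lam.domRight τ) →
      (∀ i, j < i → ∀ i', j < i' → W i - W i' ∈ lam.domRight τ) → X ∈ lam.domRight τ :=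
    fun τ hlo hhi => add_mem
      (sum_mem_of_forall_sub_mem _ _ _ (by simpa using hlo) (by simpa using (hn τ).trans hnj))
      (sum_mem_of_forall_sub_mem _ _ _
        (fun i hi i' hi' => hhi i (mem_Ico.mp hi).1 i' (mem_Ico.mp hi').1)
        (by simpa using (hn τ).trans hnr))
  have hXσ : X ∈ lam.domRight (S j) :=
    hblock _ (fun i hi i' hi' => h_before i i' j hi hi') fun i hi i' hi' => h_after j i i' hi hi'
  have hXσ₀ : X ∈ lam.domRight σ₀ :=
    hblock _ (fun i _ i' _ => h_base i i') fun i _ i' _ => h_base i i'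
  have hXE : X ∈ E := add_mem (sum_mem fun i _ => hW i) (sum_mem fun i _ => hW i)
  have hWσ : W j ∈ lam.domRight (S j) := (lam.dom_compat _ _).mp (hdom j)
  have hσX : S j ∈ lam.domLeft X := (lam.dom_compat _ _).mpr hXσ
  have hσ₀X : σ₀ ∈ lam.domLeft X := (lam.dom_compat _ _).mpr hXσ₀
  rw [hx]
  refine ⟨(lam.dom_compat _ _).mpr (add_mem hXσ hWσ), ?_⟩
  rw [lam.add_right _ _ hXσ _ hWσ, add_sub_cancel_right, lam.toFun_eq_add_toFun_sub hσX hσ₀X]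
  exact add_mem (AddSubgroup.subset_closure (Or.inr (toFun_mem_valuesOn trivial rfl hσ₀X)))
    (AddSubgroup.subset_closure (Or.inl (toFun_mem_valuesOn hXE (hS j)
      ((lam.domLeft X).sub_mem hσX hσ₀X))))

open Nat in
theorem finite_valuesOn_coset {d ℓ : ℕ} (hd : ∀ h, (lam.domRight h).index ≤ d)
    (hrow : ∀ g, (lam.annH g).index ≠ 0 ∧ (lam.annH g).index ≤ ℓ) {σ₀ : H}
    (hσ₀ : (lam.annG σ₀).index ≠ 0) {E : AddSubgroup G} {D : Set H}
    (hED : (lam.valuesOn E D).Finite) : (lam.valuesOn E {σ | σ - σ₀ ∈ D}).Finite := by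
  by_contra hinf
  set Φ := AddSubgroup.closure (lam.valuesOn E D ∪ lam.valuesOn Set.univ {σ₀})
  have hcol : (lam.valuesOn Set.univ {σ₀}).Finite := by
    refine (lam.flip.finite_imLeft hσ₀).subset ?_
    rintro _ ⟨⟨g, h⟩, ⟨-, rfl, hdom⟩, rfl⟩
    exact ⟨g, (lam.dom_compat g h).mp hdom, rfl⟩
  have hΦ : (Φ : Set K).Finite := finite_closure_of_isOfFinAddOrder (hED.union hcol)
    fun _ hk => hk.elim (isOfFinAddOrder_of_mem_valuesOn fun g => (hrow g).1)
      (isOfFinAddOrder_of_mem_valuesOn fun g => (hrow g).1)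
  obtain ⟨p, hp, hfresh⟩ :=
    exists_seq_sub_notMem _ (fun p : G × H => lam.toFun p.1 p.2) hΦ hinf
  obtain ⟨f, hf, h_before, h_after, h_base⟩ := exists_strictMono_sub_mem lam.domRight
    lam.finiteIndex_right hd (fun n => (p n).1) (fun n => (p n).2) σ₀
  -- the positions `d! * t` with `t ≤ ℓ` cut `range (d! * ℓ + 1)` into blocks of lengths
  -- divisible by `d!`
  set x := ∑ i ∈ range (d ! * ℓ + 1), (p (f i)).1
  have hdiag : ∀ t ≤ ℓ, (p (f (d ! * t))).2 ∈ lam.domLeft x ∧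
      lam.toFun x (p (f (d ! * t))).2 -
        lam.toFun (p (f (d ! * t))).1 (p (f (d ! * t))).2 ∈ Φ :=
    fun t ht => toFun_sum_sub_toFun_mem
      (fun τ => dvd_factorial (lam.finiteIndex_right τ).index_ne_zero.bot_lt (hd τ))
      (fun i => (hp _).1) (fun i => (hp _).2.1) (fun i => (hp _).2.2) h_before h_after h_base
      (lt_succ_of_le (Nat.mul_le_mul_left _ ht)) (dvd_mul_right _ _)
      (by rw [Nat.add_sub_add_right, ← Nat.mul_sub]; exact dvd_mul_right _ _)
  have := le_index_annH_of_pairwise_ne (hrow x).1 (fun t => (p (f (d ! * t))).2)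
    (fun t ht => (hdiag t (le_of_lt_succ ht)).1) fun t ht t' ht' heq => by
      refine hfresh _ _ (hf ((Nat.mul_lt_mul_left (factorial_pos d)).mpr ht')) ?_
      have := sub_mem (hdiag t' (by omega)).2 (hdiag t (le_of_lt_succ ht)).2
      rwa [heq, sub_sub_sub_cancel_left] at this
  exact absurd (hrow x).2 (by omega)

theorem finite_valuesOn_univ {d ℓ : ℕ} (hd : ∀ h, (lam.domRight h).index ≤ d)
    (hrow : ∀ g, (lam.annH g).index ≠ 0 ∧ (lam.annH g).index ≤ ℓ)
    (hcol : ∀ h, (lam.annG h).index ≠ 0) {E : AddSubgroup G} {D : AddSubgroup H}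
    [D.FiniteIndex] (hED : (lam.valuesOn E D).Finite) : (lam.valuesOn E Set.univ).Finite := by
  refine (Set.finite_iUnion fun c : H ⧸ D =>
    finite_valuesOn_coset hd hrow (hcol c.out) hED).subset ?_
  rintro _ ⟨⟨g, h⟩, ⟨hg, -, hh⟩, rfl⟩
  exact Set.mem_iUnion.mpr ⟨h, toFun_mem_valuesOn hg
    (QuotientAddGroup.eq_iff_sub_mem.mp (QuotientAddGroup.out_eq' _).symm) hh⟩

theorem finite_values_of_finite_valuesOn {d ℓ : ℕ} (hd₁ : ∀ g, (lam.domLeft g).index ≤ d)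
    (hd₂ : ∀ h, (lam.domRight h).index ≤ d)
    (hrow : ∀ g, (lam.annH g).index ≠ 0 ∧ (lam.annH g).index ≤ ℓ)
    (hcol : ∀ h, (lam.annG h).index ≠ 0 ∧ (lam.annG h).index ≤ ℓ)
    {E : AddSubgroup G} {D : AddSubgroup H} [E.FiniteIndex] [D.FiniteIndex]
    (hED : (lam.valuesOn E D).Finite) : (lam.valuesOn Set.univ Set.univ).Finite := by
  have hE : (lam.flip.valuesOn (⊤ : AddSubgroup H) E).Finite := by
    rw [AddSubgroup.coe_top, valuesOn_flip]
    exact finite_valuesOn_univ hd₂ hrow (fun h => (hcol h).1) hED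
  rw [← valuesOn_flip]
  exact finite_valuesOn_univ (lam := lam.flip) hd₁ hcol (fun g => (hrow g).1) hE

theorem exists_orthogonal_seq {d ℓ : ℕ} (hd₁ : ∀ g, (lam.domLeft g).index ≤ d)
    (hd₂ : ∀ h, (lam.domRight h).index ≤ d)
    (hrow : ∀ g, (lam.annH g).index ≠ 0 ∧ (lam.annH g).index ≤ ℓ)
    (hcol : ∀ h, (lam.annG h).index ≠ 0 ∧ (lam.annG h).index ≤ ℓ)
    (hinf : (lam.valuesOn Set.univ Set.univ).Infinite) :
    ∃ p : ℕ → G × H, (∀ n, (p n).2 ∈ lam.domLeft (p n).1) ∧ ∀ m n, m < n →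
      ((p n).2 ∈ lam.annH (p m).1 ∧ (p n).1 ∈ lam.annG (p m).2) ∧
        lam.toFun (p n).1 (p n).2 ≠ lam.toFun (p m).1 (p m).2 := by
  refine exists_seq_of_forall_finset_exists (fun p : G × H => p.2 ∈ lam.domLeft p.1)
    (fun p q : G × H => (q.2 ∈ lam.annH p.1 ∧ q.1 ∈ lam.annG p.2) ∧
      lam.toFun q.1 q.2 ≠ lam.toFun p.1 p.2) fun s _ => ?_
  have : (⨅ p ∈ s, lam.annG p.2).FiniteIndex :=
    AddSubgroup.finiteIndex_iInf' _ fun p _ => ⟨(hcol p.2).1⟩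
  have : (⨅ p ∈ s, lam.annH p.1).FiniteIndex :=
    AddSubgroup.finiteIndex_iInf' _ fun p _ => ⟨(hrow p.1).1⟩
  by_contra! hs
  refine hinf (finite_values_of_finite_valuesOn hd₁ hd₂ hrow hcol (E := ⨅ p ∈ s, lam.annG p.2)
    (D := ⨅ p ∈ s, lam.annH p.1)
    (((s : Set (G × H)).toFinite.image fun p => lam.toFun p.1 p.2).subset ?_))
  rintro _ ⟨⟨g, h⟩, ⟨hg, hh, hdom⟩, rfl⟩
  simp only [SetLike.mem_coe, AddSubgroup.mem_iInf] at hg hh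
  obtain ⟨p, hp, hph⟩ := hs (g, h) hdom
  exact ⟨p, hp, (hph ⟨hh p hp, hg p hp⟩).symm⟩

theorem toFun_sum_of_orthogonal {p : ℕ → G × H} (hp : ∀ n, (p n).2 ∈ lam.domLeft (p n).1)
    (horth : ∀ m n, m < n → (p n).2 ∈ lam.annH (p m).1 ∧ (p n).1 ∈ lam.annG (p m).2)
    {N t : ℕ} (ht : t < N) :
    (p t).2 ∈ lam.domLeft (∑ i ∈ range N, (p i).1) ∧
      lam.toFun (∑ i ∈ range N, (p i).1) (p t).2 = lam.toFun (p t).1 (p t).2 := by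
  have hmem : ∀ i, (p i).1 ∈ lam.domRight (p t).2 ∧
      (i ≠ t → lam.toFun (p i).1 (p t).2 = 0) := fun i => by
    rcases lt_trichotomy i t with hi | rfl | hi
    · exact ⟨(lam.dom_compat _ _).mp (horth i t hi).1.1, fun _ => (horth i t hi).1.2⟩
    · exact ⟨(lam.dom_compat _ _).mp (hp i), fun h => absurd rfl h⟩
    · exact ⟨(horth t i hi).2.1, fun _ => (horth t i hi).2.2⟩
  refine ⟨(lam.dom_compat _ _).mpr (AddSubgroup.sum_mem _ fun i _ => (hmem i).1), ?_⟩
  rw [toFun_sum_right _ _ fun i _ => (hmem i).1]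
  exact sum_eq_single_of_mem t (mem_range.mpr ht) fun i _ hit => (hmem i).2 hit

theorem finite_values_of_bounded_annihilators {d ℓ : ℕ}
    (hd₁ : ∀ g, (lam.domLeft g).index ≤ d) (hd₂ : ∀ h, (lam.domRight h).index ≤ d)
    (hrow : ∀ g, (lam.annH g).index ≠ 0 ∧ (lam.annH g).index ≤ ℓ)
    (hcol : ∀ h, (lam.annG h).index ≠ 0 ∧ (lam.annG h).index ≤ ℓ) :
    (lam.valuesOn Set.univ Set.univ).Finite := by
  by_contra hinf
  obtain ⟨p, hp, horth⟩ := exists_orthogonal_seq hd₁ hd₂ hrow hcol hinf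
  set x := ∑ i ∈ range (ℓ + 1), (p i).1
  have hsum := fun t (ht : t < ℓ + 1) =>
    toFun_sum_of_orthogonal hp (fun m n h => (horth m n h).1) ht
  have := le_index_annH_of_pairwise_ne (hrow x).1 (fun t => (p t).2) (fun t ht => (hsum t ht).1)
    fun t ht t' ht' => by
      rw [(hsum t ht).2, (hsum t' (ht'.trans ht)).2]
      exact (horth t' t ht').2
  exact absurd (hrow x).2 (by omega)

end BilinQuasiForm

open BilinQuasiForm in
/-- for a bilinear quasi-form with a uniform finite bound `d` on the indices
of the partial domains, the image of `λ` is contained in a finite subgroup of `K` if and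
only if there is a uniform finite bound `ℓ` on the indices of all annihilators. -/
theorem almostTrivial_iff_bounded_annihilators (lam : BilinQuasiForm G H K) (d : ℕ)
    (hd1 : ∀ g : G, (lam.domLeft g).index ≤ d)
    (hd2 : ∀ h : H, (lam.domRight h).index ≤ d) :
    (∃ F : AddSubgroup K, ((F : Set K)).Finite ∧
        ∀ g : G, ∀ h ∈ lam.domLeft g, lam.toFun g h ∈ F) ↔
      (∃ ℓ : ℕ, (∀ g : G, (lam.annH g).index ≠ 0 ∧ (lam.annH g).index ≤ ℓ) ∧
        (∀ h : H, (lam.annG h).index ≠ 0 ∧ (lam.annG h).index ≤ ℓ)) := by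
  constructor
  · rintro ⟨F, hF, hF_mem⟩
    have : Finite F := hF.to_subtype
    refine ⟨Nat.card F * d, fun g => index_annH_le_of_imLeft_le ?_ (hd1 g),
      fun h => index_annH_le_of_imLeft_le (lam := lam.flip) ?_ (hd2 h)⟩
    · rintro _ ⟨h, hh, rfl⟩
      exact hF_mem g h hh
    · rintro _ ⟨g, hg, rfl⟩
      exact hF_mem g h ((lam.dom_compat g h).mpr hg)
  · rintro ⟨ℓ, hrow, hcol⟩
    exact ⟨AddSubgroup.closure (lam.valuesOn Set.univ Set.univ),
      finite_closure_of_isOfFinAddOrder (finite_values_of_bounded_annihilators hd1 hd2 hrow hcol)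
        fun _ => isOfFinAddOrder_of_mem_valuesOn fun g => (hrow g).1,
      fun g h hh => AddSubgroup.subset_closure (toFun_mem_valuesOn trivial trivial hh)⟩

end BQF
end

section
/- Let G be a group containing a subgroup H of finite index whose commutator subgroup [H,H] is finite (i.e. G is virtually finite-by-abelian). Then the FC-centre Z̃(G) = {g ∈ G : the centralizer C_G(g) has finite index in G} is a characteristic subgroup of finite index in G whose commutator subgroup [Z̃(G), Z̃(G)] is finite. In particular, G has a characteristic finite-by-abelian subgroup of finite index. -/
/-!
If `⁅H, H⁆` is finite then `x * h * x⁻¹ = ⁅x, h⁆ * h` shows that each `h ∈ H` has finitely many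
`H`-conjugates, so `C_H(h)`, and with it `C_G(h)`, has finite index: `H` lies in the FC-centre `F`,
which therefore has finite index. Automorphisms preserve the indices of centralizers, so `F` is
characteristic. Writing elements of `F` as `u * a` with `u` in a finite transversal `T` of `H` and
`a ∈ H`, every commutator of `F` is a product of five conjugates of elements of
`T ∪ ⁅H, H⁆ ⊆ F` or their inverses. Elements of `F` have finitely many conjugates, so `F` has
finitely many commutators, and by Schur's theorem `⁅F, F⁆` is finite.
-/

open Subgroup Pointwise
open scoped commutatorElement

section

variable {G : Type*} [Group G]

theorem Subgroup.index_centralizer_singleton (g : G) :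
    (centralizer {g}).index = (conjugatesOf g).ncard := by
  rw [centralizer_eq_comap_stabilizer]
  refine (index_comap_of_surjective (H := MulAction.stabilizer (ConjAct G) g)
    (f := (ConjAct.toConjAct : G ≃* ConjAct G).toMonoidHom) (MulEquiv.surjective _)).trans ?_
  rw [MulAction.index_stabilizer]
  congr 1
  ext h
  exact ConjAct.mem_orbit_conjAct.trans isConj_comm

theorem Subgroup.finiteIndex_centralizer_singleton_iff {g : G} :
    (centralizer {g}).FiniteIndex ↔ (conjugatesOf g).Finite := by
  rw [finiteIndex_iff, index_centralizer_singleton]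
  exact ⟨Set.finite_of_ncard_ne_zero,
    fun h ↦ ((Set.ncard_pos h).2 ⟨g, mem_conjugatesOf_self⟩).ne'⟩

theorem Subgroup.index_centralizer_singleton_mulEquiv_apply {G' : Type*} [Group G'] (φ : G ≃* G')
    (g : G) :
    (centralizer {φ g}).index = (centralizer {g}).index := by
  have : (centralizer {φ g}).comap φ.toMonoidHom = centralizer {g} := by
    ext x
    simp only [mem_comap, mem_centralizer_singleton_iff, MulEquiv.coe_toMonoidHom, ← map_mul,
      φ.injective.eq_iff]
  rw [← this, index_comap_of_surjective _ φ.surjective]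

variable (G) in
def fcCentre : Subgroup G where
  carrier := {g | (centralizer {g}).FiniteIndex}
  one_mem' := finiteIndex_of_le (H := ⊤) fun x _ ↦
    mem_centralizer_singleton_iff.2 (Commute.one_right x)
  mul_mem' {a b} (_ : (centralizer {a}).FiniteIndex) (_ : (centralizer {b}).FiniteIndex) :=
    finiteIndex_of_le (H := centralizer {a} ⊓ centralizer {b}) fun _ ⟨hxa, hxb⟩ ↦
      mem_centralizer_singleton_iff.2 <| Commute.mul_right
        (mem_centralizer_singleton_iff.1 hxa) (mem_centralizer_singleton_iff.1 hxb)
  inv_mem' {a} (_ : (centralizer {a}).FiniteIndex) :=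
    finiteIndex_of_le (H := centralizer {a}) fun _ hxa ↦
      mem_centralizer_singleton_iff.2 (Commute.inv_right (mem_centralizer_singleton_iff.1 hxa))

theorem mem_fcCentre {g : G} : g ∈ fcCentre G ↔ (centralizer {g}).FiniteIndex :=
  Iff.rfl

theorem mem_fcCentre_iff_finite_conjugatesOf {g : G} : g ∈ fcCentre G ↔ (conjugatesOf g).Finite :=
  mem_fcCentre.trans finiteIndex_centralizer_singleton_iff

instance fcCentre.characteristic : (fcCentre G).Characteristic :=
  characteristic_iff_comap_eq.2 fun φ ↦ by
    ext g
    rw [mem_comap, MulEquiv.coe_toMonoidHom, mem_fcCentre, mem_fcCentre, finiteIndex_iff,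
      finiteIndex_iff, index_centralizer_singleton_mulEquiv_apply]

theorem finite_conjugatesOfSet_of_subset_fcCentre {S : Set G} (hS : S.Finite)
    (hSF : S ⊆ fcCentre G) :
    (Group.conjugatesOfSet S).Finite :=
  hS.biUnion fun _ hg ↦ mem_fcCentre_iff_finite_conjugatesOf.1 (hSF hg)

theorem finite_conjugatesOf_of_finite_commutator [Finite (_root_.commutator G)] (g : G) :
    (conjugatesOf g).Finite := by
  refine ((Set.toFinite (_root_.commutator G : Set G)).image (· * g)).subset fun _ hx ↦ ?_
  obtain ⟨x, rfl⟩ := isConj_iff.1 hx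
  exact ⟨⁅x, g⁆, commutator_mem_commutator (mem_top x) (mem_top g), by group⟩

theorem Subgroup.finite_commutator_iff (H : Subgroup G) :
    Finite (_root_.commutator H) ↔ ((⁅H, H⁆ : Subgroup G) : Set G).Finite := by
  rw [← map_subtype_commutator, coe_map, Set.finite_image_iff H.subtype_injective.injOn]
  exact Set.finite_coe_iff

theorem le_fcCentre_of_finite_commutator (H : Subgroup G) [H.FiniteIndex]
    [Finite (_root_.commutator H)] : H ≤ fcCentre G := by
  intro h hh
  have : (centralizer {(⟨h, hh⟩ : H)}).FiniteIndex :=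
    finiteIndex_centralizer_singleton_iff.2 (finite_conjugatesOf_of_finite_commutator _)
  have : ((centralizer {(⟨h, hh⟩ : H)}).map H.subtype).FiniteIndex := by
    rw [finiteIndex_iff, index_map_subtype]
    exact mul_ne_zero FiniteIndex.index_ne_zero FiniteIndex.index_ne_zero
  refine finiteIndex_of_le (H := (centralizer {(⟨h, hh⟩ : H)}).map H.subtype) ?_
  rintro _ ⟨x, hx, rfl⟩
  exact mem_centralizer_singleton_iff.2 (congrArg Subtype.val (mem_centralizer_singleton_iff.1 hx))

open Group in
theorem commutatorElement_mul_mul_mem {H : Subgroup G} {S : Set G}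
    (hHS : ((⁅H, H⁆ : Subgroup G) : Set G) ⊆ S) {u v a b : G} (hu : u ∈ S) (hv : v ∈ S)
    (ha : a ∈ H) (hb : b ∈ H) :
    ⁅u * a, v * b⁆ ∈ conjugatesOfSet S * (conjugatesOfSet S)⁻¹ * conjugatesOfSet S *
      conjugatesOfSet S * (conjugatesOfSet S)⁻¹ := by
  have conj_mem {s : G} (c : G) (hs : s ∈ S) : c * s * c⁻¹ ∈ conjugatesOfSet S :=
    conj_mem_conjugatesOfSet (subset_conjugatesOfSet hs)
  have expand : ⁅u * a, v * b⁆ = (u * a) * v * (u * a)⁻¹ * (u * v * u⁻¹)⁻¹ *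
      ((u * v) * ⁅a, b⁆ * (u * v)⁻¹) * u * ((v * b) * u * (v * b)⁻¹)⁻¹ := by
    group
  rw [expand]
  exact Set.mul_mem_mul (Set.mul_mem_mul (Set.mul_mem_mul (Set.mul_mem_mul (conj_mem _ hv)
    (Set.inv_mem_inv.2 (conj_mem _ hv))) (conj_mem _ (hHS (commutator_mem_commutator ha hb))))
    (subset_conjugatesOfSet hu)) (Set.inv_mem_inv.2 (conj_mem _ hu))

theorem finite_commutator_fcCentre (H : Subgroup G) [H.FiniteIndex]
    [Finite (_root_.commutator H)] : Finite (_root_.commutator (fcCentre G)) := by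
  have hHF := le_fcCentre_of_finite_commutator H
  set T := Set.range (fun q : G ⧸ H ↦ q.out) ∩ fcCentre G
  have decomp {x : G} (hx : x ∈ fcCentre G) : ∃ u ∈ T, ∃ a ∈ H, x = u * a := by
    obtain ⟨a, ha⟩ := QuotientGroup.mk_out_eq_mul H x
    refine ⟨_, ⟨Set.mem_range_self _, ?_⟩, a⁻¹, inv_mem a.2, by rw [ha, mul_inv_cancel_right]⟩
    rw [ha]
    exact mul_mem hx (hHF a.2)
  have hS : (T ∪ (⁅H, H⁆ : Subgroup G)).Finite :=
    ((Set.finite_range _).inter_of_left _).union ((finite_commutator_iff H).1 ‹_›)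
  have hSF : T ∪ (⁅H, H⁆ : Subgroup G) ⊆ fcCentre G :=
    Set.union_subset Set.inter_subset_right ((commutator_le_self H).trans hHF)
  have hΩ := finite_conjugatesOfSet_of_subset_fcCentre hS hSF
  have : Finite (commutatorSet (fcCentre G)) := by
    refine Set.Finite.of_finite_image
      ((((hΩ.mul hΩ.inv).mul hΩ).mul hΩ).mul hΩ.inv |>.subset ?_) Subtype.val_injective.injOn
    rintro _ ⟨_, ⟨x, y, rfl⟩, rfl⟩
    obtain ⟨u, hu, a, ha, hx⟩ := decomp x.2
    obtain ⟨v, hv, b, hb, hy⟩ := decomp y.2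
    rw [show ((⁅x, y⁆ : fcCentre G) : G) = ⁅(x : G), (y : G)⁆ from rfl, hx, hy]
    exact commutatorElement_mul_mul_mem Set.subset_union_right (.inl hu) (.inl hv) ha hb
  -- Schur: finitely many commutators generate a finite subgroup
  infer_instance

end

/-- if a group `G` has a finite-index subgroup `H` with finite commutator
subgroup `⁅H,H⁆` (i.e. `G` is virtually finite-by-abelian), then the FC-centre
`Z̃(G) = {g : C_G(g) has finite index}` is a characteristic subgroup of finite index in `G`
whose commutator subgroup is finite.  In particular, `G` has a characteristic
finite-by-abelian subgroup of finite index. -/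
theorem fcCentre_characteristic_finiteIndex_finiteByAbelian
    {G : Type*} [Group G] (H : Subgroup G) (hH : H.FiniteIndex)
    (hHcomm : ((⁅H, H⁆ : Subgroup G) : Set G).Finite) :
    ∃ S : Subgroup G,
      (S : Set G) = {g : G | (Subgroup.centralizer {g}).FiniteIndex} ∧
      S.Characteristic ∧ S.FiniteIndex ∧
      ((⁅S, S⁆ : Subgroup G) : Set G).Finite := by
  have := (finite_commutator_iff H).2 hHcomm
  exact ⟨fcCentre G, rfl, inferInstance, finiteIndex_of_le (le_fcCentre_of_finite_commutator H),
    (finite_commutator_iff _).1 (finite_commutator_fcCentre H)⟩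
end

section
/- Let R be a (possibly non-unital) ring, S₀ a subring of R of finite additive index, and I a finite (two-sided) ideal of S₀ with S₀·S₀ ⊆ I. Then R has a subring R₀ containing S₀ which has finite additive index in R, such that I is a two-sided ideal of R₀ and R₀·R₀ ⊆ I; in particular R₀ is finite-by-null. Explicitly, one may take R₀ = S ∩ {r ∈ R : s·r ∈ I for all s ∈ S}, where S = {r ∈ R : r·s ∈ I for all s ∈ S₀}. -/
/-- if `S₀` is a subring of finite additive index in a (possibly non-unital)
ring `R` and `I` is a finite two-sided ideal of `S₀` with `S₀·S₀ ⊆ I`, then there is a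
subring `R₀ ⊇ S₀` of finite additive index in `R` such that `I` is a two-sided ideal of
`R₀` and `R₀·R₀ ⊆ I` (so `R₀` is finite-by-null); explicitly one may take
`R₀ = S ∩ {r : s·r ∈ I for all s ∈ S}` where `S = {r : r·s ∈ I for all s ∈ S₀}`. -/
theorem subring_finiteByNull {R : Type*} [NonUnitalRing R]
    (S₀ : NonUnitalSubring R) (hS₀ : S₀.toAddSubgroup.FiniteIndex)
    (I : AddSubgroup R) (hIS : (I : Set R) ⊆ (S₀ : Set R))
    (hIfin : ((I : Set R)).Finite)
    (hIideal : ∀ s ∈ S₀, ∀ x ∈ I, s * x ∈ I ∧ x * s ∈ I)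
    (hmul : ∀ a ∈ S₀, ∀ b ∈ S₀, a * b ∈ I) :
    ∃ R₀ : NonUnitalSubring R,
      (∀ x ∈ S₀, x ∈ R₀) ∧
      R₀.toAddSubgroup.FiniteIndex ∧
      (I : Set R) ⊆ (R₀ : Set R) ∧
      (∀ r ∈ R₀, ∀ x ∈ I, r * x ∈ I ∧ x * r ∈ I) ∧
      (∀ a ∈ R₀, ∀ b ∈ R₀, a * b ∈ I) ∧
      (R₀ : Set R) = {r : R | ∀ s ∈ S₀, r * s ∈ I} ∩
        {r : R | ∀ s : R, (∀ t ∈ S₀, s * t ∈ I) → s * r ∈ I} := by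
  set C : Set R := {r : R | ∀ s ∈ S₀, r * s ∈ I} ∩
      {r : R | ∀ s : R, (∀ t ∈ S₀, s * t ∈ I) → s * r ∈ I} with hC
  have habI : ∀ a ∈ C, ∀ b ∈ C, a * b ∈ I := fun a ha b hb => hb.2 a ha.1
  refine ⟨{
    carrier := C
    zero_mem' := ⟨fun s _ => by simpa using I.zero_mem,
      fun s _ => by simpa using I.zero_mem⟩
    add_mem' := fun {a b} ha hb =>
      ⟨fun s hs => by rw [add_mul]; exact I.add_mem (ha.1 s hs) (hb.1 s hs),
       fun s hs => by rw [mul_add]; exact I.add_mem (ha.2 s hs) (hb.2 s hs)⟩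
    neg_mem' := fun {a} ha =>
      ⟨fun s hs => by rw [neg_mul]; exact I.neg_mem (ha.1 s hs),
       fun s hs => by rw [mul_neg]; exact I.neg_mem (ha.2 s hs)⟩
    mul_mem' := fun {a b} ha hb => by
      have hab : a * b ∈ I := habI a ha b hb
      exact ⟨fun s hs => hmul _ (hIS hab) s hs, fun s hs => hs _ (hIS hab)⟩ }, ?_, ?_, ?_, ?_,
    habI, rfl⟩
  · -- S₀ ⊆ R₀
    exact fun x hx => ⟨fun s hs => hmul x hx s hs, fun s hs => hs x hx⟩
  · -- finite index
    exact AddSubgroup.finiteIndex_of_le (H := S₀.toAddSubgroup)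
      (fun x hx => ⟨fun s hs => hmul x hx s hs, fun s hs => hs x hx⟩)
  · -- I ⊆ R₀
    exact fun x hx => ⟨fun s hs => hmul x (hIS hx) s hs, fun s hs => hs x (hIS hx)⟩
  · -- I ideal of R₀
    exact fun r hr x hx => ⟨hr.1 x (hIS hx), hr.2 x (fun t ht => hmul x (hIS hx) t ht)⟩
end

section
/- Let V and W be sets, k ≥ 1 and ℓ ≥ 1 integers, and f : V → W a map all of whose fibres have at most k elements. Let (S_j)_{j ∈ J} be a family of subsets of V such that the intersection of any ℓ distinct members S_j is empty. Then the intersection of the images f[S_j] over any (ℓ−1)·k + 1 distinct indices j ∈ J is empty. -/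
/-- if `f : V → W` has all fibres of size at most `k`, and any `ℓ` distinct
members of the family `(S_j)` have empty intersection, then any `(ℓ-1)·k + 1` distinct
images `f[S_j]` have empty intersection. -/
theorem image_family_empty_inter {V W : Type*} {J : Type*} (k ℓ : ℕ)
    (hk : 1 ≤ k) (hℓ : 1 ≤ ℓ) (f : V → W)
    (hfib : ∀ w : W, (f ⁻¹' {w}).Finite ∧ (f ⁻¹' {w}).ncard ≤ k)
    (S : J → Set V)
    (hS : ∀ t : Finset J, t.card = ℓ → ⋂ j ∈ t, S j = ∅) :
    ∀ t : Finset J, t.card = (ℓ - 1) * k + 1 → ⋂ j ∈ t, f '' S j = ∅ := by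
  intro t ht
  classical
  by_contra hne
  obtain ⟨w, hw⟩ := Set.nonempty_iff_ne_empty.2 hne
  simp only [Set.mem_iInter] at hw
  -- choose a preimage in each S j
  choose g hg1 hg2 using fun (j : t) => hw j j.2
  obtain ⟨hfin, hcard⟩ := hfib w
  set F : Finset V := hfin.toFinset with hF
  have hmaps : ∀ j : t, g j ∈ F := by
    intro j
    simp [hF, Set.Finite.mem_toFinset, Set.mem_preimage, hg2 j]
  have hFcard : F.card ≤ k := by
    rwa [← Set.ncard_coe_finset, hF, Set.Finite.coe_toFinset]
  have hlt : F.card * (ℓ - 1) < (Finset.univ : Finset t).card := by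
    have : (Finset.univ : Finset t).card = (ℓ - 1) * k + 1 := by
      rw [Finset.card_univ, Fintype.card_coe, ht]
    rw [this]
    calc F.card * (ℓ - 1) ≤ k * (ℓ - 1) := Nat.mul_le_mul_right _ hFcard
      _ = (ℓ - 1) * k := Nat.mul_comm _ _
      _ < (ℓ - 1) * k + 1 := Nat.lt_succ_self _
  obtain ⟨v, hvF, hv⟩ := Finset.exists_lt_card_fiber_of_mul_lt_card_of_maps_to
    (fun j _ => hmaps j) hlt
  -- the set of indices whose chosen point is v
  set B : Finset t := Finset.univ.filter fun j => g j = v with hB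
  have hBcard : ℓ ≤ B.card := by omega
  obtain ⟨u, hu, hucard⟩ := Finset.exists_subset_card_eq hBcard
  have : v ∈ ⋂ j ∈ u.image (fun j : t => (j : J)), S j := by
    simp only [Set.mem_iInter, Finset.mem_image]
    rintro j ⟨i, hi, rfl⟩
    have := hu hi
    rw [hB, Finset.mem_filter] at this
    rw [← this.2]
    exact hg1 i
  have hcard' : (u.image (fun j : t => (j : J))).card = ℓ := by
    rw [Finset.card_image_of_injective _ Subtype.coe_injective, hucard]
  rw [hS _ hcard'] at this
  exact this
end
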